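/- arXiv:1211.6536 — 8 statements merged into one kernel-verified Lean document; each statement's English description precedes it below -/
import Mathlib

section
/- Assume (m,d) has uniform subexponential growth. Then for every ε > 0 there exists C > 0 such that the cardinality of the ball satisfies #B_r(x) ≤ C·e^{ε r} for all x ∈ X and all r ≥ 0; in particular every distance ball is a finite set. -/
/-!
For `y ∈ B_r(x)` we also have `x ∈ B_r(y)`, so growth with rate `ε / 2` gives
`m x ≤ m(B_r(y)) ≤ C e^{ε r / 2} m y`. Every point of `B_r(x)` thus has mass at least
`m x / (C e^{ε r / 2})`, while `m(B_r(x)) ≤ C e^{ε r / 2} m x`; hence `#B_r(x) ≤ C² e^{ε r}`.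
-/

open scoped ENNReal

theorem Set.encard_mul_le_tsum {X : Type*} {s : Set X} {w : X → ℝ≥0∞} {δ : ℝ≥0∞}
    (h : ∀ y ∈ s, δ ≤ w y) : (s.encard : ℝ≥0∞) * δ ≤ ∑' y : s, w y := by
  rw [Set.encard, ← ENNReal.tsum_const]
  exact ENNReal.tsum_le_tsum fun y ↦ h y y.2

section BallMass

variable {X : Type*} (m : X → ℝ) (d : X → X → ℝ)

noncomputable def ballMass (x : X) (r : ℝ) : ℝ≥0∞ :=
  ∑' y : {y : X // d x y ≤ r}, ENNReal.ofReal (m y)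

variable {m d}

theorem ofReal_le_ballMass {x y : X} {r : ℝ} (h : d x y ≤ r) :
    ENNReal.ofReal (m y) ≤ ballMass m d x r :=
  ENNReal.le_tsum (⟨y, h⟩ : {y : X // d x y ≤ r})

theorem encard_ball_le_sq (hm : ∀ x, 0 < m x) (hd_symm : ∀ x y, d x y = d y x)
    {r : ℝ} {K : ℝ≥0∞} (hK : ∀ z, ballMass m d z r ≤ K * ENNReal.ofReal (m z)) (x : X) :
    ({y : X | d x y ≤ r}.encard : ℝ≥0∞) ≤ K ^ 2 := by
  have hlow : ∀ y ∈ {y : X | d x y ≤ r}, ENNReal.ofReal (m x) ≤ K * ENNReal.ofReal (m y) :=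
    fun y hy ↦ (ofReal_le_ballMass ((hd_symm y x).trans_le hy)).trans (hK y)
  have hmx : ENNReal.ofReal (m x) ≠ 0 := (ENNReal.ofReal_pos.2 (hm x)).ne'
  refine (ENNReal.mul_le_mul_iff_left hmx ENNReal.ofReal_ne_top).1 ?_
  calc ({y : X | d x y ≤ r}.encard : ℝ≥0∞) * ENNReal.ofReal (m x)
      ≤ ∑' y : {y : X | d x y ≤ r}, K * ENNReal.ofReal (m y) := Set.encard_mul_le_tsum hlow
    _ = K * ballMass m d x r := ENNReal.tsum_mul_left
    _ ≤ K ^ 2 * ENNReal.ofReal (m x) := by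
      rw [sq, mul_assoc]
      gcongr
      exact hK x

end BallMass

theorem stmt1_general {X : Type*}
    (m : X → ℝ) (hm : ∀ x, 0 < m x)
    (d : X → X → ℝ)
    (hd_symm : ∀ x y, d x y = d y x)
    (husg : ∀ ε : ℝ, 0 < ε → ∃ C : ℝ, 0 < C ∧ ∀ (x : X) (r : ℝ), 0 ≤ r →
      (∑' y : {y : X // d x y ≤ r}, ENNReal.ofReal (m y)) ≤
        ENNReal.ofReal (C * Real.exp (ε * r) * m x)) :
    ∀ ε : ℝ, 0 < ε → ∃ C : ℝ, 0 < C ∧ ∀ (x : X) (r : ℝ), 0 ≤ r →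
      {y : X | d x y ≤ r}.encard ≤ ENNReal.ofReal (C * Real.exp (ε * r)) ∧
      {y : X | d x y ≤ r}.Finite := by
  intro ε hε
  obtain ⟨C, hC, hball⟩ := husg (ε / 2) (half_pos hε)
  refine ⟨C ^ 2, by positivity, fun x r hr ↦ ?_⟩
  set K := C * Real.exp (ε / 2 * r)
  have hK₀ : 0 ≤ K := by positivity
  have hK : ∀ z, ballMass m d z r ≤ ENNReal.ofReal K * ENNReal.ofReal (m z) :=
    fun z ↦ ENNReal.ofReal_mul hK₀ ▸ hball z r hr
  have hK_sq : ENNReal.ofReal K ^ 2 = ENNReal.ofReal (C ^ 2 * Real.exp (ε * r)) := by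
    rw [← ENNReal.ofReal_pow hK₀, mul_pow, ← Real.exp_nat_mul]
    ring_nf
  have hcard := hK_sq ▸ encard_ball_le_sq hm hd_symm hK x
  refine ⟨hcard, Set.encard_ne_top_iff.1 ?_⟩
  exact ENat.toENNReal_ne_top.1 (ne_top_of_le_ne_top ENNReal.ofReal_ne_top hcard)

/-- If `(m, d)` has uniform subexponential growth, then for every `ε > 0`
there is `C > 0` with `#B_r(x) ≤ C · e^{ε r}` for all `x` and `r ≥ 0`; in particular every
distance ball is a finite set. -/
theorem stmt1 {X : Type*} [Countable X]
    (m : X → ℝ) (hm : ∀ x, 0 < m x)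
    (d : X → X → ℝ)
    (hd_nonneg : ∀ x y, 0 ≤ d x y)
    (hd_symm : ∀ x y, d x y = d y x)
    (hd_diag : ∀ x, d x x = 0)
    (hd_tri : ∀ x y z, d x z ≤ d x y + d y z)
    (husg : ∀ ε : ℝ, 0 < ε → ∃ C : ℝ, 0 < C ∧ ∀ (x : X) (r : ℝ), 0 ≤ r →
      (∑' y : {y : X // d x y ≤ r}, ENNReal.ofReal (m y)) ≤
        ENNReal.ofReal (C * Real.exp (ε * r) * m x)) :
    ∀ ε : ℝ, 0 < ε → ∃ C : ℝ, 0 < C ∧ ∀ (x : X) (r : ℝ), 0 ≤ r →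
      {y : X | d x y ≤ r}.encard ≤ ENNReal.ofReal (C * Real.exp (ε * r)) ∧
      {y : X | d x y ≤ r}.Finite :=
  stmt1_general m hm d hd_symm husg
end

section
/- Assume (m,d) has uniform subexponential growth. Then for every ε > 0 there exists C > 0 such that ∑_{y∈X} e^{−ε d(x,y)} ≤ C for all x ∈ X. -/
/-!
Applying the growth bound to the ball of radius `d(x,y)` around `y`, which contains `x`, gives
`m x ≤ C e^{δ d(x,y)} m y`. Hence `e^{-3δ d(x,y)} ≤ (C / m x) e^{-2δ d(x,y)} m y`, and summing the
right-hand side over the annuli `n ≤ d(x,y) < n + 1`, whose mass is at most `C e^{δ (n+1)} m x`,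
leaves the geometric series `C² e^δ ∑ₙ e^{-δ n}`.
-/

open ENNReal Real

section Growth

variable {X : Type*}

theorem tsum_antitone_mul_le_tsum_ball (ρ : X → ℝ) (hρ : ∀ y, 0 ≤ ρ y) {φ : ℝ → ℝ≥0∞}
    (hφ : Antitone φ) (μ : X → ℝ≥0∞) :
    ∑' y, φ (ρ y) * μ y ≤ ∑' n : ℕ, φ n * ∑' y : {y // ρ y ≤ n + 1}, μ y := by
  rw [← (Equiv.sigmaFiberEquiv fun y => ⌊ρ y⌋₊).tsum_eq, ENNReal.tsum_sigma']
  refine ENNReal.tsum_le_tsum fun n => ?_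
  calc ∑' y : {y // ⌊ρ y⌋₊ = n}, φ (ρ y) * μ y
      ≤ ∑' y : {y // ⌊ρ y⌋₊ = n}, φ n * μ y :=
        ENNReal.tsum_le_tsum fun y => by
          gcongr
          exact hφ (y.2 ▸ Nat.floor_le (hρ y) :)
    _ = φ n * ∑' y : {y // ⌊ρ y⌋₊ = n}, μ y := ENNReal.tsum_mul_left
    _ ≤ φ n * ∑' y : {y // ρ y ≤ n + 1}, μ y := by
        gcongr
        exact ENNReal.tsum_mono_subtype μ fun y (hy : ⌊ρ y⌋₊ = n) =>
          (hy ▸ Nat.lt_floor_add_one (ρ y)).le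

theorem ENNReal.tsum_ofReal_mul_pow {K r : ℝ} (hK : 0 ≤ K) (hr₀ : 0 ≤ r) (hr₁ : r < 1) :
    ∑' n : ℕ, ENNReal.ofReal (K * r ^ n) = ENNReal.ofReal (K / (1 - r)) := by
  rw [← ENNReal.ofReal_tsum_of_nonneg (fun n => by positivity)
    ((summable_geometric_of_lt_one hr₀ hr₁).mul_left K), tsum_mul_left,
    tsum_geometric_of_lt_one hr₀ hr₁, div_eq_mul_inv]

def HasBallGrowth (m : X → ℝ) (d : X → X → ℝ) (C δ : ℝ) : Prop :=
  ∀ (x : X) (r : ℝ), 0 ≤ r →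
    (∑' y : {y : X // d x y ≤ r}, ENNReal.ofReal (m y)) ≤ ENNReal.ofReal (C * exp (δ * r) * m x)

variable {m : X → ℝ} {d : X → X → ℝ} {C δ : ℝ}

theorem HasBallGrowth.le_mul_exp_mul (h : HasBallGrowth m d C δ) (hm : ∀ x, 0 < m x)
    (hd_nonneg : ∀ x y, 0 ≤ d x y) (hd_symm : ∀ x y, d x y = d y x) (x y : X) :
    m x ≤ C * exp (δ * d x y) * m y := by
  have hx : ENNReal.ofReal (m x) ≤ ENNReal.ofReal (C * exp (δ * d x y) * m y) :=
    (ENNReal.le_tsum (⟨x, le_rfl⟩ : {z // d y z ≤ d y x})).trans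
      ((h y (d y x) (hd_nonneg y x)).trans_eq (by rw [hd_symm y x]))
  exact (ENNReal.ofReal_le_ofReal_iff'.1 hx).resolve_right (hm x).not_ge

theorem HasBallGrowth.exp_neg_le (h : HasBallGrowth m d C δ) (hm : ∀ x, 0 < m x)
    (hd_nonneg : ∀ x y, 0 ≤ d x y) (hd_symm : ∀ x y, d x y = d y x) (x y : X) :
    exp (-(3 * δ * d x y)) ≤ C / m x * exp (-(2 * δ * d x y)) * m y := by
  rw [div_mul_eq_mul_div, div_mul_eq_mul_div, le_div_iff₀ (hm x)]
  calc exp (-(3 * δ * d x y)) * m x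
      ≤ exp (-(3 * δ * d x y)) * (C * exp (δ * d x y) * m y) := by
        gcongr
        exact h.le_mul_exp_mul hm hd_nonneg hd_symm x y
    _ = C * exp (-(2 * δ * d x y)) * m y := by
        rw [show -(2 * δ * d x y) = -(3 * δ * d x y) + δ * d x y by ring, exp_add]
        ring

theorem HasBallGrowth.tsum_exp_neg_le (h : HasBallGrowth m d C δ) (hC : 0 ≤ C) (hδ : 0 < δ)
    (hm : ∀ x, 0 < m x) (hd_nonneg : ∀ x y, 0 ≤ d x y) (hd_symm : ∀ x y, d x y = d y x)
    (x : X) :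
    ∑' y, ENNReal.ofReal (exp (-(3 * δ * d x y))) ≤
      ENNReal.ofReal (C ^ 2 * exp δ / (1 - exp (-δ))) := by
  set φ : ℝ → ℝ≥0∞ := fun t => ENNReal.ofReal (C / m x * exp (-(2 * δ * t)))
  have hCm : 0 ≤ C / m x := div_nonneg hC (hm x).le
  have hφ : Antitone φ := fun s t hst => ENNReal.ofReal_le_ofReal (by gcongr)
  calc ∑' y, ENNReal.ofReal (exp (-(3 * δ * d x y)))
      ≤ ∑' y, φ (d x y) * ENNReal.ofReal (m y) := ENNReal.tsum_le_tsum fun y => by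
        rw [← ENNReal.ofReal_mul (by positivity)]
        exact ENNReal.ofReal_le_ofReal (h.exp_neg_le hm hd_nonneg hd_symm x y)
    _ ≤ ∑' n : ℕ, φ n * ∑' y : {y // d x y ≤ n + 1}, ENNReal.ofReal (m y) :=
        tsum_antitone_mul_le_tsum_ball _ (hd_nonneg x) hφ _
    _ ≤ ∑' n : ℕ, φ n * ENNReal.ofReal (C * exp (δ * (n + 1)) * m x) :=
        ENNReal.tsum_le_tsum fun n => by gcongr; exact h x _ (by positivity)
    _ = ∑' n : ℕ, ENNReal.ofReal (C ^ 2 * exp δ * exp (-δ) ^ n) := by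
        congr 1; ext n
        rw [← ENNReal.ofReal_mul (by positivity), ← exp_nat_mul]
        congr 1
        have hexp : exp (-(2 * δ * n)) * exp (δ * (n + 1)) = exp δ * exp (n * -δ) := by
          rw [← exp_add, ← exp_add]
          ring_nf
        calc C / m x * exp (-(2 * δ * n)) * (C * exp (δ * (n + 1)) * m x)
            = C ^ 2 * (exp (-(2 * δ * n)) * exp (δ * (n + 1))) * (m x / m x) := by ring
          _ = C ^ 2 * exp δ * exp (n * -δ) := by rw [hexp, div_self (hm x).ne']; ring
    _ = ENNReal.ofReal (C ^ 2 * exp δ / (1 - exp (-δ))) :=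
        ENNReal.tsum_ofReal_mul_pow (by positivity) (exp_nonneg _)
          (exp_lt_one_iff.2 (neg_lt_zero.2 hδ))

end Growth

theorem stmt2_general {X : Type*}
    (m : X → ℝ) (hm : ∀ x, 0 < m x)
    (d : X → X → ℝ)
    (hd_nonneg : ∀ x y, 0 ≤ d x y)
    (hd_symm : ∀ x y, d x y = d y x)
    (husg : ∀ ε : ℝ, 0 < ε → ∃ C : ℝ, 0 < C ∧ ∀ (x : X) (r : ℝ), 0 ≤ r →
      (∑' y : {y : X // d x y ≤ r}, ENNReal.ofReal (m y)) ≤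
        ENNReal.ofReal (C * Real.exp (ε * r) * m x)) :
    ∀ ε : ℝ, 0 < ε → ∃ C : ℝ, 0 < C ∧ ∀ x : X,
      (∑' y : X, ENNReal.ofReal (Real.exp (-(ε * d x y)))) ≤ ENNReal.ofReal C := by
  intro ε hε
  obtain ⟨C, hC, hgrowth⟩ := husg (ε / 3) (by positivity)
  have hr : 0 < 1 - exp (-(ε / 3)) := sub_pos.2 (exp_lt_one_iff.2 (by linarith))
  refine ⟨C ^ 2 * exp (ε / 3) / (1 - exp (-(ε / 3))), by positivity, fun x => ?_⟩
  have hsum := HasBallGrowth.tsum_exp_neg_le hgrowth hC.le (by positivity) hm hd_nonneg hd_symm x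
  rwa [show 3 * (ε / 3) = ε by ring] at hsum

/-- If `(m, d)` has uniform subexponential growth, then for every `ε > 0`
there is `C > 0` with `∑_{y ∈ X} e^{-ε d(x,y)} ≤ C` for all `x ∈ X`. -/
theorem stmt2 {X : Type*} [Countable X]
    (m : X → ℝ) (hm : ∀ x, 0 < m x)
    (d : X → X → ℝ)
    (hd_nonneg : ∀ x y, 0 ≤ d x y)
    (hd_symm : ∀ x y, d x y = d y x)
    (hd_diag : ∀ x, d x x = 0)
    (hd_tri : ∀ x y z, d x z ≤ d x y + d y z)
    (husg : ∀ ε : ℝ, 0 < ε → ∃ C : ℝ, 0 < C ∧ ∀ (x : X) (r : ℝ), 0 ≤ r →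
      (∑' y : {y : X // d x y ≤ r}, ENNReal.ofReal (m y)) ≤
        ENNReal.ofReal (C * Real.exp (ε * r) * m x)) :
    ∀ ε : ℝ, 0 < ε → ∃ C : ℝ, 0 < C ∧ ∀ x : X,
      (∑' y : X, ENNReal.ofReal (Real.exp (-(ε * d x y)))) ≤ ENNReal.ofReal C :=
  stmt2_general m hm d hd_nonneg hd_symm husg
end

section
/- If (m,d) has uniform subexponential growth and the jump size s of d is finite, then the graph is locally finite: every vertex x ∈ X has only finitely many neighbors, i.e. the set {y ∈ X : b(x,y) > 0} is finite for every x ∈ X. -/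
/-! Fix one `ε > 0` and a radius `r ≥ max s 0`; growth gives `m(B_r(y)) ≤ K m(y)` with
`K = C e^{εr}`. If `y ∈ B_r(x)` then `x ∈ B_r(y)`, so `m(x) ≤ K m(y)`: every point of `B_r(x)`
carries mass at least `m(x)/K`. Since `m(B_r(x))` is finite, the ball is finite, and it contains
all neighbours of `x` because jumps have size at most `s`. -/

section BallFinite

variable {X : Type*} {m : X → ℝ} {d : X → X → ℝ} {r K : ℝ}

theorem le_mul_of_tsum_ball_le (hd_symm : ∀ x y, d x y = d y x)
    (hball : ∀ x, ∑' y : {y : X // d x y ≤ r}, ENNReal.ofReal (m y) ≤ ENNReal.ofReal (K * m x))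
    {x y : X} (hmx : 0 < m x) (hxy : d x y ≤ r) : m x ≤ K * m y := by
  have hyx : d y x ≤ r := hd_symm x y ▸ hxy
  have h : ENNReal.ofReal (m x) ≤ ENNReal.ofReal (K * m y) :=
    (ENNReal.le_tsum (⟨x, hyx⟩ : {z : X // d y z ≤ r})).trans (hball y)
  exact (ENNReal.ofReal_le_ofReal_iff'.mp h).resolve_right hmx.not_ge

theorem finite_ball_of_tsum_ball_le (hd_symm : ∀ x y, d x y = d y x) (hm : ∀ x, 0 < m x)
    (hK : 0 < K)
    (hball : ∀ x, ∑' y : {y : X // d x y ≤ r}, ENNReal.ofReal (m y) ≤ ENNReal.ofReal (K * m x))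
    (x : X) : {y | d x y ≤ r}.Finite := by
  have hsum : ∑' y : {y : X // d x y ≤ r}, ENNReal.ofReal (m y) ≠ ⊤ :=
    ne_top_of_le_ne_top ENNReal.ofReal_ne_top (hball x)
  have hmass : ENNReal.ofReal (m x / K) ≠ 0 := by
    simpa using div_pos (hm x) hK
  have hfin := ENNReal.finite_const_le_of_tsum_ne_top hsum hmass
  have huniv : {y : {y : X // d x y ≤ r} | ENNReal.ofReal (m x / K) ≤ ENNReal.ofReal (m y)}
      = Set.univ :=
    Set.eq_univ_of_forall fun y => ENNReal.ofReal_le_ofReal <|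
      (div_le_iff₀' hK).mpr (le_mul_of_tsum_ball_le hd_symm hball (hm x) y.2)
  rw [huniv, Set.finite_univ_iff] at hfin
  exact Set.finite_coe_iff.mp hfin

end BallFinite

theorem stmt3_general {X : Type*}
    (b : X → X → ℝ)
    (m : X → ℝ) (hm : ∀ x, 0 < m x)
    (d : X → X → ℝ)
    (hd_symm : ∀ x y, d x y = d y x)
    (s : ℝ) (hjump : ∀ x y, 0 < b x y → d x y ≤ s)
    (husg : ∀ ε : ℝ, 0 < ε → ∃ C : ℝ, 0 < C ∧ ∀ (x : X) (r : ℝ), 0 ≤ r →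
      (∑' y : {y : X // d x y ≤ r}, ENNReal.ofReal (m y)) ≤
        ENNReal.ofReal (C * Real.exp (ε * r) * m x)) :
    ∀ x : X, {y : X | 0 < b x y}.Finite := by
  intro x
  obtain ⟨C, hC, hgrowth⟩ := husg 1 one_pos
  have hball : {y | d x y ≤ max s 0}.Finite :=
    finite_ball_of_tsum_ball_le hd_symm hm (by positivity)
      (fun y => hgrowth y (max s 0) (le_max_right s 0)) x
  exact hball.subset fun y hy => (hjump x y hy).trans (le_max_left s 0)

/-- If `(m, d)` has uniform subexponential growth and the jump size of `d`
is finite (i.e. `d(x,y) ≤ s` whenever `b(x,y) > 0`), then the graph is locally finite: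
every vertex has only finitely many neighbors. -/
theorem stmt3 {X : Type*} [Countable X]
    (b : X → X → ℝ)
    (hb_symm : ∀ x y, b x y = b y x)
    (hb_diag : ∀ x, b x x = 0)
    (hb_nonneg : ∀ x y, 0 ≤ b x y)
    (n : X → ℝ) (hn : ∀ x, HasSum (b x) (n x)) (hn_pos : ∀ x, 0 < n x)
    (m : X → ℝ) (hm : ∀ x, 0 < m x)
    (d : X → X → ℝ)
    (hd_nonneg : ∀ x y, 0 ≤ d x y)
    (hd_symm : ∀ x y, d x y = d y x)
    (hd_diag : ∀ x, d x x = 0)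
    (hd_tri : ∀ x y z, d x z ≤ d x y + d y z)
    (s : ℝ) (hjump : ∀ x y, 0 < b x y → d x y ≤ s)
    (husg : ∀ ε : ℝ, 0 < ε → ∃ C : ℝ, 0 < C ∧ ∀ (x : X) (r : ℝ), 0 ≤ r →
      (∑' y : {y : X // d x y ≤ r}, ENNReal.ofReal (m y)) ≤
        ENNReal.ofReal (C * Real.exp (ε * r) * m x)) :
    ∀ x : X, {y : X | 0 < b x y}.Finite :=
  stmt3_general b m hm d hd_symm s hjump husg
end

section
/- If (m,d) has uniform subexponential growth and the jump size s of d is finite, then the combinatorial vertex degree is bounded: sup_{x∈X} deg(x) < ∞, where deg(x) := #{y ∈ X : b(x,y) > 0}. -/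
/-!
Fix `ε = 1` and the radius `r = max s 0`, so that every neighbour of `x` lies in `B_r(x)` and
`x` lies in `B_r(y)`. With `A = C₁ e^r`, uniform subexponential growth gives `m(B_r(x)) ≤ A m(x)`.
Hence each neighbour `y` of `x` satisfies `m(x) ≤ m(B_r(y)) ≤ A m(y)`, and for any finite set `F`
of neighbours `#F · m(x) ≤ A ∑_{y ∈ F} m(y) ≤ A m(B_r(x)) ≤ A² m(x)`, i.e. `#F ≤ A²`.
-/

theorem Set.encard_le_of_forall_finset_card_le {α : Type*} {S : Set α} {k : ℕ}
    (h : ∀ F : Finset α, ↑F ⊆ S → F.card ≤ k) : S.encard ≤ k := by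
  by_cases hS : S.Finite
  · rw [hS.encard_eq_coe_toFinset_card]
    exact_mod_cast h _ (by simp)
  · obtain ⟨F, hFS, hF⟩ := Set.Infinite.exists_subset_card_eq hS (k + 1)
    have := h F hFS
    omega

theorem Finset.sum_le_of_tsum_subtype_ofReal_le {α : Type*} {p : α → Prop} {f : α → ℝ}
    {F : Finset α} {c : ℝ} (hf : ∀ x, 0 ≤ f x) (hc : 0 ≤ c) (hF : ∀ x ∈ F, p x)
    (h : ∑' x : {x // p x}, ENNReal.ofReal (f x) ≤ ENNReal.ofReal c) :
    ∑ x ∈ F, f x ≤ c := by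
  classical
  rw [← ENNReal.ofReal_le_ofReal_iff hc, ENNReal.ofReal_sum_of_nonneg fun x _ ↦ hf x,
    ← Finset.sum_subtype_of_mem _ hF]
  exact (ENNReal.sum_le_tsum _).trans h

theorem card_le_sq_of_forall_le_mul_of_sum_le_mul {α : Type*} {m : α → ℝ} {x : α}
    {F : Finset α} {A : ℝ} (hx : 0 < m x) (hA : 0 ≤ A) (hlower : ∀ y ∈ F, m x ≤ A * m y)
    (hupper : ∑ y ∈ F, m y ≤ A * m x) : (F.card : ℝ) ≤ A ^ 2 := by
  have : F.card * m x ≤ A ^ 2 * m x :=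
    calc F.card * m x = ∑ _ ∈ F, m x := by rw [Finset.sum_const, nsmul_eq_mul]
      _ ≤ ∑ y ∈ F, A * m y := Finset.sum_le_sum hlower
      _ = A * ∑ y ∈ F, m y := (Finset.mul_sum _ _ _).symm
      _ ≤ A * (A * m x) := mul_le_mul_of_nonneg_left hupper hA
      _ = A ^ 2 * m x := by ring
  exact le_of_mul_le_mul_right this hx

theorem stmt4_general {X : Type*}
    (b : X → X → ℝ)
    (m : X → ℝ) (hm : ∀ x, 0 < m x)
    (d : X → X → ℝ)
    (hd_symm : ∀ x y, d x y = d y x)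
    (s : ℝ) (hjump : ∀ x y, 0 < b x y → d x y ≤ s)
    (husg : ∀ ε : ℝ, 0 < ε → ∃ C : ℝ, 0 < C ∧ ∀ (x : X) (r : ℝ), 0 ≤ r →
      (∑' y : {y : X // d x y ≤ r}, ENNReal.ofReal (m y)) ≤
        ENNReal.ofReal (C * Real.exp (ε * r) * m x)) :
    ∃ D : ℕ, ∀ x : X, {y : X | 0 < b x y}.encard ≤ (D : ℕ∞) := by
  obtain ⟨C, hC, hgrowth⟩ := husg 1 one_pos
  set r := max s 0
  set A := C * Real.exp (1 * r)
  have hA : 0 ≤ A := by positivity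
  have hball (x : X) (F : Finset X) (hF : ∀ y ∈ F, d x y ≤ r) : ∑ y ∈ F, m y ≤ A * m x :=
    F.sum_le_of_tsum_subtype_ofReal_le (fun y ↦ (hm y).le) (by have := hm x; positivity) hF
      (hgrowth x r (le_max_right s 0))
  have hnear (x y : X) (hxy : 0 < b x y) : d x y ≤ r := (hjump x y hxy).trans (le_max_left s 0)
  have hlower (x y : X) (hxy : 0 < b x y) : m x ≤ A * m y := by
    simpa using hball y {x} (by simpa [hd_symm] using hnear x y hxy)
  refine ⟨⌈A ^ 2⌉₊, fun x ↦ Set.encard_le_of_forall_finset_card_le fun F hF ↦ ?_⟩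
  have hcard := card_le_sq_of_forall_le_mul_of_sum_le_mul (hm x) hA
    (fun y hy ↦ hlower x y (hF hy)) (hball x F fun y hy ↦ hnear x y (hF hy))
  exact Nat.cast_le.mp (hcard.trans (Nat.le_ceil _))

/-- If `(m, d)` has uniform subexponential growth and the jump size of `d`
is finite, then the combinatorial vertex degree `deg(x) = #{y | b(x,y) > 0}` is bounded. -/
theorem stmt4 {X : Type*} [Countable X]
    (b : X → X → ℝ)
    (hb_symm : ∀ x y, b x y = b y x)
    (hb_diag : ∀ x, b x x = 0)
    (hb_nonneg : ∀ x y, 0 ≤ b x y)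
    (n : X → ℝ) (hn : ∀ x, HasSum (b x) (n x)) (hn_pos : ∀ x, 0 < n x)
    (m : X → ℝ) (hm : ∀ x, 0 < m x)
    (d : X → X → ℝ)
    (hd_nonneg : ∀ x y, 0 ≤ d x y)
    (hd_symm : ∀ x y, d x y = d y x)
    (hd_diag : ∀ x, d x x = 0)
    (hd_tri : ∀ x y z, d x z ≤ d x y + d y z)
    (s : ℝ) (hjump : ∀ x y, 0 < b x y → d x y ≤ s)
    (husg : ∀ ε : ℝ, 0 < ε → ∃ C : ℝ, 0 < C ∧ ∀ (x : X) (r : ℝ), 0 ≤ r →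
      (∑' y : {y : X // d x y ≤ r}, ENNReal.ofReal (m y)) ≤
        ENNReal.ofReal (C * Real.exp (ε * r) * m x)) :
    ∃ D : ℕ, ∀ x : X, {y : X | 0 < b x y}.encard ≤ (D : ℕ∞) :=
  stmt4_general b m hm d hd_symm s hjump husg
end

section
/- Assume there is D > 0 such that b(x,y) ≤ D for all x, y ∈ X and m(x) ≥ 1/D for all x ∈ X. If (m,d) has uniform subexponential growth and the jump size of d is finite, then the graph has bounded geometry: sup_{x∈X} n(x)/m(x) < ∞. -/
/-!
With `r = max s 0`, every neighbour `y` of `x` lies in the ball `B_r(x)` and carries weight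
`b(x,y) ≤ D ≤ D² m(y)`, so `n(x) ≤ D² m(B_r(x))`. Uniform subexponential growth with `ε = 1`
bounds the ball mass by `C e^r m(x)`, hence `n(x)/m(x) ≤ D² C e^r` uniformly in `x`.
-/

open Function

section

variable {X : Type*}

theorem ofReal_le_mul_tsum_subtype_of_support_subset {f g : X → ℝ} {a c : ℝ}
    (hf : HasSum f a) (hf_nonneg : ∀ y, 0 ≤ f y) {S : Set X} (hS : support f ⊆ S)
    (hc : 0 ≤ c) (hfg : ∀ y ∈ S, f y ≤ c * g y) :
    ENNReal.ofReal a ≤ ENNReal.ofReal c * ∑' y : S, ENNReal.ofReal (g y) := by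
  have hsupp : support (ENNReal.ofReal ∘ f) ⊆ S :=
    (support_comp_subset ENNReal.ofReal_zero f).trans hS
  calc ENNReal.ofReal a = ∑' y, ENNReal.ofReal (f y) := by
        rw [← hf.tsum_eq, ENNReal.ofReal_tsum_of_nonneg hf_nonneg hf.summable]
    _ = ∑' y : S, ENNReal.ofReal (f y) := (tsum_subtype_eq_of_support_subset hsupp).symm
    _ ≤ ∑' y : S, ENNReal.ofReal c * ENNReal.ofReal (g y) :=
        ENNReal.tsum_le_tsum fun y => by
          rw [← ENNReal.ofReal_mul hc]
          exact ENNReal.ofReal_le_ofReal (hfg y y.2)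
    _ = ENNReal.ofReal c * ∑' y : S, ENNReal.ofReal (g y) := ENNReal.tsum_mul_left

theorem le_sq_mul_of_tsum_ball_le {b : X → X → ℝ} {n m : X → ℝ} {d : X → X → ℝ}
    {D r B : ℝ} {x : X} (hb_nonneg : ∀ y, 0 ≤ b x y) (hn : HasSum (b x) (n x))
    (hD : 0 < D) (hbD : ∀ y, b x y ≤ D) (hmD : ∀ y, 1 / D ≤ m y)
    (hjump : ∀ y, 0 < b x y → d x y ≤ r) (hB : 0 ≤ B)
    (hball : ∑' y : {y : X // d x y ≤ r}, ENNReal.ofReal (m y) ≤ ENNReal.ofReal B) :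
    n x ≤ D ^ 2 * B := by
  have hsupp : support (b x) ⊆ {y | d x y ≤ r} := fun y hy =>
    hjump y ((hb_nonneg y).lt_of_ne (Ne.symm hy))
  have hweight : ∀ y ∈ {y | d x y ≤ r}, b x y ≤ D ^ 2 * m y := fun y _ =>
    calc b x y ≤ D := hbD y
      _ = D ^ 2 * (1 / D) := by field_simp
      _ ≤ D ^ 2 * m y := by gcongr; exact hmD y
  rw [← ENNReal.ofReal_le_ofReal_iff (by positivity), ENNReal.ofReal_mul (by positivity)]
  exact (ofReal_le_mul_tsum_subtype_of_support_subset hn hb_nonneg hsupp (by positivity)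
    hweight).trans (mul_le_mul_right hball _)

end

theorem stmt5_general {X : Type*}
    (b : X → X → ℝ)
    (hb_nonneg : ∀ x y, 0 ≤ b x y)
    (n : X → ℝ) (hn : ∀ x, HasSum (b x) (n x))
    (m : X → ℝ) (hm : ∀ x, 0 < m x)
    (D : ℝ) (hD : 0 < D) (hbD : ∀ x y, b x y ≤ D) (hmD : ∀ x, 1 / D ≤ m x)
    (d : X → X → ℝ)
    (s : ℝ) (hjump : ∀ x y, 0 < b x y → d x y ≤ s)
    (husg : ∀ ε : ℝ, 0 < ε → ∃ C : ℝ, 0 < C ∧ ∀ (x : X) (r : ℝ), 0 ≤ r →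
      (∑' y : {y : X // d x y ≤ r}, ENNReal.ofReal (m y)) ≤
        ENNReal.ofReal (C * Real.exp (ε * r) * m x)) :
    ∃ M : ℝ, ∀ x : X, n x / m x ≤ M := by
  obtain ⟨C, hC, hball⟩ := husg 1 one_pos
  set r := max s 0
  refine ⟨D ^ 2 * (C * Real.exp (1 * r)), fun x => ?_⟩
  have hmx := hm x
  have hnx : n x ≤ D ^ 2 * (C * Real.exp (1 * r) * m x) :=
    le_sq_mul_of_tsum_ball_le (hb_nonneg x) (hn x) hD (hbD x) hmD
      (fun y hy => (hjump x y hy).trans (le_max_left s 0)) (by positivity)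
      (hball x r (le_max_right s 0))
  rw [div_le_iff₀ hmx]
  linarith

/-- Suppose `b ≤ D` and `m ≥ 1/D` for some `D > 0`. If `(m, d)` has uniform
subexponential growth and the jump size of `d` is finite, then the graph has bounded geometry:
`sup_x n(x)/m(x) < ∞`. -/
theorem stmt5 {X : Type*} [Countable X]
    (b : X → X → ℝ)
    (hb_symm : ∀ x y, b x y = b y x)
    (hb_diag : ∀ x, b x x = 0)
    (hb_nonneg : ∀ x y, 0 ≤ b x y)
    (n : X → ℝ) (hn : ∀ x, HasSum (b x) (n x)) (hn_pos : ∀ x, 0 < n x)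
    (m : X → ℝ) (hm : ∀ x, 0 < m x)
    (D : ℝ) (hD : 0 < D) (hbD : ∀ x y, b x y ≤ D) (hmD : ∀ x, 1 / D ≤ m x)
    (d : X → X → ℝ)
    (hd_nonneg : ∀ x y, 0 ≤ d x y)
    (hd_symm : ∀ x y, d x y = d y x)
    (hd_diag : ∀ x, d x x = 0)
    (hd_tri : ∀ x y z, d x z ≤ d x y + d y z)
    (s : ℝ) (hjump : ∀ x y, 0 < b x y → d x y ≤ s)
    (husg : ∀ ε : ℝ, 0 < ε → ∃ C : ℝ, 0 < C ∧ ∀ (x : X) (r : ℝ), 0 ≤ r →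
      (∑' y : {y : X // d x y ≤ r}, ENNReal.ofReal (m y)) ≤
        ENNReal.ofReal (C * Real.exp (ε * r) * m x)) :
    ∃ M : ℝ, ∀ x : X, n x / m x ≤ M :=
  stmt5_general b hb_nonneg n hn m hm D hD hbD hmD d s hjump husg
end

section
/- Let d be an intrinsic pseudo metric whose jump size is at most s < ∞. Then there exists C > 0, depending only on s, such that for every ε ∈ (0,1], every ψ ∈ Lip_ε and every finitely supported f : X → ℂ: |Q(e^{−ψ} f, e^{ψ} f) − Q(f,f)| ≤ C ε² ‖f‖₂² + C ε ‖f‖₂ Q(f)^{1/2}. -/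
open scoped ComplexConjugate

/-- The quadratic form `Q(f,g) = (1/2) ∑_{x,y} b(x,y)(f(x)-f(y)) conj(g(x)-g(y))
      + ∑_x c(x) f(x) conj(g(x))`. -/
noncomputable def graphForm {X : Type*} (b : X → X → ℝ) (c : X → ℝ) (f g : X → ℂ) : ℂ :=
  (1 / 2) * ∑' q : X × X, (b q.1 q.2 : ℂ) * (f q.1 - f q.2) * conj (g q.1 - g q.2)
    + ∑' x : X, (c x : ℂ) * f x * conj (g x)

/-- The `ℓ²(X,m)` norm of a function. -/
noncomputable def l2norm {X : Type*} (m : X → ℝ) (f : X → ℂ) : ℝ :=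
  Real.sqrt (∑' x : X, ‖f x‖ ^ 2 * m x)

/-!
On an edge `(x, y)` the potential terms cancel and the edge term of `Q(e^{-ψ} f, e^{ψ} f) - Q(f)`
is `α f(x) conj f(y) + β f(y) conj f(x)` with `α = 1 - e^{ψ y - ψ x}`, `β = 1 - e^{ψ x - ψ y}`.
Since `α + β = α β`, this equals `α (f(x) conj f(y) - f(y) conj f(x)) + α β f(y) conj f(x)`, and
`|α|, |β| ≤ ε d e^{ε d}` with `ε d(x, y) ≤ s` on edges. The first part is bounded by
`ε d |f(x)| |f(x) - f(y)|`; by Cauchy–Schwarz and the intrinsic bound `∑_y b d² ≤ m` these sum to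
`ε ‖f‖ Q(f)^{1/2}`. The second is bounded by `ε² d² |f(x)| |f(y)|`, which sums to `ε² ‖f‖²` by the
intrinsic bound again. Only finitely many edges contribute, since both ends must lie in the
support of `f`.
-/

open Finset Real

lemma abs_one_sub_exp_le (u : ℝ) : |1 - exp u| ≤ |u| * exp |u| := by
  rcases le_or_gt 0 u with hu | hu
  · rw [abs_of_nonneg hu, abs_of_nonpos (by linarith [one_le_exp hu])]
    have : exp u * exp (-u) = 1 := by rw [← exp_add]; simp
    nlinarith [add_one_le_exp (-u), exp_pos u]
  · rw [abs_of_neg hu, abs_of_nonneg (by linarith [exp_lt_one_iff.mpr hu])]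
    nlinarith [add_one_le_exp u, one_le_exp (neg_nonneg.mpr hu.le)]

lemma norm_mul_conj_sub_mul_conj_le (z w : ℂ) :
    ‖z * conj w - w * conj z‖ ≤ 2 * ‖z‖ * ‖z - w‖ := calc
  ‖z * conj w - w * conj z‖ = ‖z * conj (w - z) + (z - w) * conj z‖ := by
    rw [map_sub]; ring_nf
  _ ≤ ‖z‖ * ‖w - z‖ + ‖z - w‖ * ‖z‖ := by
    refine (norm_add_le _ _).trans_eq ?_
    rw [norm_mul, norm_mul, RCLike.norm_conj, RCLike.norm_conj]
  _ = 2 * ‖z‖ * ‖z - w‖ := by rw [norm_sub_rev w]; ring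

/-- The contribution of an edge `(x, y)` to `Q(e^{-ψ} f, e^{ψ} f) - Q(f)`, with `p = ψ x`,
`q = ψ y`, `z = f x`, `w = f y`. -/
noncomputable def twistDiff (p q : ℝ) (z w : ℂ) : ℂ :=
  ((exp (-p) : ℂ) * z - (exp (-q) : ℂ) * w) * conj ((exp p : ℂ) * z - (exp q : ℂ) * w)
    - (z - w) * conj (z - w)

lemma twistDiff_eq (p q : ℝ) (z w : ℂ) :
    twistDiff p q z w = ((1 - exp (q - p) : ℝ) : ℂ) * (z * conj w - w * conj z)
      + (((1 - exp (q - p)) * (1 - exp (p - q)) : ℝ) : ℂ) * (w * conj z) := by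
  have hp : (exp p : ℂ) ≠ 0 := Complex.ofReal_ne_zero.mpr (exp_pos p).ne'
  have hq : (exp q : ℂ) ≠ 0 := Complex.ofReal_ne_zero.mpr (exp_pos q).ne'
  simp only [twistDiff, exp_sub, exp_neg, map_sub, map_mul, Complex.conj_ofReal]
  push_cast
  field_simp
  ring

lemma twistDiff_zero_left (p q : ℝ) (w : ℂ) : twistDiff p q 0 w = 0 := by
  simp [twistDiff_eq]

lemma twistDiff_zero_right (p q : ℝ) (z : ℂ) : twistDiff p q z 0 = 0 := by
  simp [twistDiff_eq]

lemma norm_twistDiff_le {p q r : ℝ} (h : |p - q| ≤ r) (z w : ℂ) :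
    ‖twistDiff p q z w‖ ≤ exp (2 * r) * (2 * r * ‖z‖ * ‖z - w‖ + r ^ 2 * (‖z‖ * ‖w‖)) := by
  have hr : 0 ≤ r := (abs_nonneg _).trans h
  have hα : |1 - exp (q - p)| ≤ r * exp r := (abs_one_sub_exp_le _).trans <| by
    rw [abs_sub_comm] at h; gcongr
  have hβ : |1 - exp (p - q)| ≤ r * exp r := (abs_one_sub_exp_le _).trans (by gcongr)
  rw [twistDiff_eq]
  refine (norm_add_le _ _).trans ?_
  rw [norm_mul, norm_mul, Complex.norm_real, Complex.norm_real, Real.norm_eq_abs,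
    Real.norm_eq_abs, abs_mul, norm_mul, RCLike.norm_conj, mul_comm ‖w‖]
  calc |1 - exp (q - p)| * ‖z * conj w - w * conj z‖
        + |1 - exp (q - p)| * |1 - exp (p - q)| * (‖z‖ * ‖w‖)
      ≤ r * exp r * (2 * ‖z‖ * ‖z - w‖) + r * exp r * (r * exp r) * (‖z‖ * ‖w‖) := by
        gcongr
        exact norm_mul_conj_sub_mul_conj_le z w
    _ = exp r * (2 * r * ‖z‖ * ‖z - w‖) + exp (2 * r) * (r ^ 2 * (‖z‖ * ‖w‖)) := by
        rw [two_mul r, exp_add]; ring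
    _ ≤ exp (2 * r) * (2 * r * ‖z‖ * ‖z - w‖ + r ^ 2 * (‖z‖ * ‖w‖)) := by
        rw [mul_add]
        gcongr
        linarith

section Summability

variable {X : Type*} {b : X → X → ℝ}

lemma norm_le_sum_norm_of_notMem {E : Type*} [SeminormedAddCommGroup E] {S : Finset X}
    {g : X → E} (hg : ∀ x ∉ S, g x = 0) (x : X) : ‖g x‖ ≤ ∑ y ∈ S, ‖g y‖ := by
  by_cases hx : x ∈ S
  · exact single_le_sum (fun y _ => norm_nonneg (g y)) hx
  · simpa [hg x hx] using sum_nonneg fun y _ => norm_nonneg (g y)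

lemma summable_ite_fst_mem [DecidableEq X] (hb0 : ∀ x y, 0 ≤ b x y)
    (hb : ∀ x, Summable (b x)) (S : Finset X) :
    Summable fun q : X × X => if q.1 ∈ S then b q.1 q.2 else 0 := by
  refine (summable_prod_of_nonneg fun q => ?_).mpr ⟨fun x => ?_, ?_⟩
  · dsimp only; split_ifs <;> simp [hb0]
  · by_cases hx : x ∈ S <;> simp [hx, hb x]
  · exact summable_of_ne_finset_zero (s := S) fun x hx => by simp [hx]

lemma summable_of_norm_le_mul_weight {E : Type*} [NormedAddCommGroup E] [CompleteSpace E]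
    (hb0 : ∀ x y, 0 ≤ b x y) (hsymm : ∀ x y, b x y = b y x) (hb : ∀ x, Summable (b x))
    (S : Finset X) {G : X × X → E} (M : ℝ) (hG : ∀ q, ‖G q‖ ≤ M * b q.1 q.2)
    (hGS : ∀ q : X × X, q.1 ∉ S → q.2 ∉ S → G q = 0) : Summable G := by
  classical
  set w : X × X → ℝ := fun q => if q.1 ∈ S then b q.1 q.2 else 0
  have hw : Summable w := summable_ite_fst_mem hb0 hb S
  have hw' : Summable (w ∘ Prod.swap) := (Equiv.prodComm X X).summable_iff.mpr hw
  refine ((hw.add hw').mul_left |M|).of_norm_bounded fun q => ?_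
  have hGM : ‖G q‖ ≤ |M| * b q.1 q.2 :=
    (hG q).trans (mul_le_mul_of_nonneg_right (le_abs_self M) (hb0 _ _))
  by_cases h1 : q.1 ∈ S
  · have : 0 ≤ w q.swap := by simp only [w]; split_ifs <;> simp [hb0]
    simp only [Function.comp_apply, w, if_pos h1] at this ⊢
    nlinarith [abs_nonneg M]
  by_cases h2 : q.2 ∈ S
  · simpa [w, h1, h2, hsymm q.2 q.1] using hGM
  · simp [hGS q h1 h2, w, h1, h2]

lemma summable_weight_mul_sub_mul_conj_sub
    (hb0 : ∀ x y, 0 ≤ b x y) (hsymm : ∀ x y, b x y = b y x) (hb : ∀ x, Summable (b x))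
    (S : Finset X) {g h : X → ℂ} (hg : ∀ x ∉ S, g x = 0) (hh : ∀ x ∉ S, h x = 0) :
    Summable fun q : X × X => (b q.1 q.2 : ℂ) * (g q.1 - g q.2) * conj (h q.1 - h q.2) := by
  have hgM := norm_le_sum_norm_of_notMem hg
  have hhM := norm_le_sum_norm_of_notMem hh
  refine summable_of_norm_le_mul_weight hb0 hsymm hb S
    ((2 * ∑ y ∈ S, ‖g y‖) * (2 * ∑ y ∈ S, ‖h y‖)) (fun q => ?_)
    (fun q h1 h2 => by simp [hg _ h1, hg _ h2, hh _ h1, hh _ h2])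
  have h1 : ‖g q.1 - g q.2‖ ≤ 2 * ∑ y ∈ S, ‖g y‖ :=
    (norm_sub_le _ _).trans (by linarith [hgM q.1, hgM q.2])
  have h2 : ‖h q.1 - h q.2‖ ≤ 2 * ∑ y ∈ S, ‖h y‖ :=
    (norm_sub_le _ _).trans (by linarith [hhM q.1, hhM q.2])
  rw [norm_mul, norm_mul, RCLike.norm_conj, Complex.norm_real, Real.norm_eq_abs,
    abs_of_nonneg (hb0 _ _), mul_assoc, mul_comm]
  exact mul_le_mul_of_nonneg_right
    (mul_le_mul h1 h2 (norm_nonneg _) (by linarith [(norm_nonneg _).trans (hgM q.1)]))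
    (hb0 _ _)

end Summability

section GraphForm

variable {X : Type*} {b : X → X → ℝ} {c : X → ℝ} {S : Finset X} {f : X → ℂ}

lemma graphForm_self (b : X → X → ℝ) (c : X → ℝ) (f : X → ℂ) :
    graphForm b c f f = (((1 / 2) * ∑' q : X × X, b q.1 q.2 * ‖f q.1 - f q.2‖ ^ 2
      + ∑' x, c x * ‖f x‖ ^ 2 : ℝ) : ℂ) := by
  have hsq (z : ℂ) : z * conj z = ((‖z‖ ^ 2 : ℝ) : ℂ) := by
    rw [Complex.mul_conj, Complex.normSq_eq_norm_sq]
  push_cast [Complex.ofReal_tsum]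
  simp only [graphForm, mul_assoc, hsq]
  push_cast
  ring

lemma sum_weight_mul_norm_sub_sq_le (hb0 : ∀ x y, 0 ≤ b x y) (hsymm : ∀ x y, b x y = b y x)
    (hb : ∀ x, Summable (b x)) (hc : ∀ x, 0 ≤ c x) (hf : ∀ x ∉ S, f x = 0) :
    ∑ q ∈ S ×ˢ S, b q.1 q.2 * ‖f q.1 - f q.2‖ ^ 2 ≤ 2 * (graphForm b c f f).re := by
  have hsum : Summable fun q : X × X => b q.1 q.2 * ‖f q.1 - f q.2‖ ^ 2 := by
    refine (summable_weight_mul_sub_mul_conj_sub hb0 hsymm hb S hf hf).norm.congr fun q => ?_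
    rw [norm_mul, norm_mul, RCLike.norm_conj, Complex.norm_real, Real.norm_eq_abs,
      abs_of_nonneg (hb0 _ _), mul_assoc, sq]
  have hle := hsum.sum_le_tsum (S ×ˢ S) fun q _ => mul_nonneg (hb0 _ _) (sq_nonneg _)
  have hpot : 0 ≤ ∑' x, c x * ‖f x‖ ^ 2 := tsum_nonneg fun x => mul_nonneg (hc x) (sq_nonneg _)
  rw [graphForm_self, Complex.ofReal_re]
  linarith

lemma graphForm_twist_sub (hb0 : ∀ x y, 0 ≤ b x y) (hsymm : ∀ x y, b x y = b y x)
    (hb : ∀ x, Summable (b x)) (hf : ∀ x ∉ S, f x = 0) (ψ : X → ℝ) :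
    graphForm b c (fun x => (exp (-ψ x) : ℂ) * f x) (fun x => (exp (ψ x) : ℂ) * f x)
        - graphForm b c f f
      = 1 / 2 * ∑ q ∈ S ×ˢ S, (b q.1 q.2 : ℂ) * twistDiff (ψ q.1) (ψ q.2) (f q.1) (f q.2) := by
  have hf' (t : X → ℝ) : ∀ x ∉ S, (exp (t x) : ℂ) * f x = 0 := fun x hx => by simp [hf x hx]
  have hpot (x : X) : (c x : ℂ) * ((exp (-ψ x) : ℂ) * f x) * conj ((exp (ψ x) : ℂ) * f x)
      = (c x : ℂ) * f x * conj (f x) := by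
    rw [map_mul, Complex.conj_ofReal, show (c x : ℂ) * ((exp (-ψ x) : ℂ) * f x) *
      ((exp (ψ x) : ℂ) * conj (f x)) = (c x : ℂ) * f x * conj (f x) * ((exp (-ψ x + ψ x) : ℝ) : ℂ)
      by rw [exp_add]; push_cast; ring]
    simp
  have hedge : ∀ q ∉ S ×ˢ S, (b q.1 q.2 : ℂ) * twistDiff (ψ q.1) (ψ q.2) (f q.1) (f q.2) = 0 := by
    rintro ⟨x, y⟩ hq
    rw [mem_product, not_and_or] at hq
    rcases hq with hx | hy
    · simp [hf x hx, twistDiff_zero_left]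
    · simp [hf y hy, twistDiff_zero_right]
  have hpair (q : X × X) :
      (b q.1 q.2 : ℂ) * ((exp (-ψ q.1) : ℂ) * f q.1 - (exp (-ψ q.2) : ℂ) * f q.2)
          * conj ((exp (ψ q.1) : ℂ) * f q.1 - (exp (ψ q.2) : ℂ) * f q.2)
        - (b q.1 q.2 : ℂ) * (f q.1 - f q.2) * conj (f q.1 - f q.2)
      = (b q.1 q.2 : ℂ) * twistDiff (ψ q.1) (ψ q.2) (f q.1) (f q.2) := by
    simp only [twistDiff]; ring
  simp only [graphForm, tsum_congr hpot]
  rw [add_sub_add_right_eq_sub, ← mul_sub, ← Summable.tsum_sub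
    (summable_weight_mul_sub_mul_conj_sub hb0 hsymm hb S (hf' fun x => -ψ x) (hf' ψ))
    (summable_weight_mul_sub_mul_conj_sub hb0 hsymm hb S hf hf), tsum_congr hpair,
    tsum_eq_sum hedge]

end GraphForm

lemma sum_le_of_tsum_ofReal_le {ι : Type*} {g : ι → ℝ} {a : ℝ} (hg : ∀ i, 0 ≤ g i)
    (ha : 0 ≤ a) (h : ∑' i, ENNReal.ofReal (g i) ≤ ENNReal.ofReal a) (S : Finset ι) :
    ∑ i ∈ S, g i ≤ a := by
  rw [← ENNReal.ofReal_le_ofReal_iff ha, ENNReal.ofReal_sum_of_nonneg fun i _ => hg i]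
  exact (ENNReal.sum_le_tsum S).trans h

section Intrinsic

variable {X : Type*} {b d : X → X → ℝ} {m : X → ℝ} {S : Finset X}

lemma sum_weight_dist_sq_mul_sq_le (hI : ∀ x, ∑ y ∈ S, b x y * d x y ^ 2 ≤ m x) (a : X → ℝ) :
    ∑ q ∈ S ×ˢ S, b q.1 q.2 * d q.1 q.2 ^ 2 * a q.1 ^ 2 ≤ ∑ x ∈ S, a x ^ 2 * m x := by
  rw [sum_product]
  refine sum_le_sum fun x _ => ?_
  dsimp only
  rw [← sum_mul, mul_comm]
  exact mul_le_mul_of_nonneg_left (hI x) (sq_nonneg _)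

lemma sum_weight_dist_sq_mul_mul_le (hsymm : ∀ x y, b x y = b y x)
    (hdsymm : ∀ x y, d x y = d y x) (hb0 : ∀ x y, 0 ≤ b x y)
    (hI : ∀ x, ∑ y ∈ S, b x y * d x y ^ 2 ≤ m x) (a : X → ℝ) :
    ∑ q ∈ S ×ˢ S, b q.1 q.2 * d q.1 q.2 ^ 2 * (a q.1 * a q.2) ≤ ∑ x ∈ S, a x ^ 2 * m x := by
  have hswap : ∑ q ∈ S ×ˢ S, b q.1 q.2 * d q.1 q.2 ^ 2 * a q.2 ^ 2
      = ∑ q ∈ S ×ˢ S, b q.1 q.2 * d q.1 q.2 ^ 2 * a q.1 ^ 2 := by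
    rw [sum_product, sum_product, sum_comm]
    simp only [hsymm, hdsymm]
  have hamgm : ∑ q ∈ S ×ˢ S, b q.1 q.2 * d q.1 q.2 ^ 2 * (a q.1 * a q.2)
      ≤ ∑ q ∈ S ×ˢ S, b q.1 q.2 * d q.1 q.2 ^ 2 * ((a q.1 ^ 2 + a q.2 ^ 2) / 2) :=
    sum_le_sum fun q _ => mul_le_mul_of_nonneg_left (by nlinarith [sq_nonneg (a q.1 - a q.2)])
      (mul_nonneg (hb0 _ _) (sq_nonneg _))
  have := sum_weight_dist_sq_mul_sq_le hI a
  simp only [mul_div_assoc', mul_add, add_div, sum_add_distrib, ← sum_div, hswap] at hamgm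
  linarith

lemma sum_weight_dist_mul_mul_le (hb0 : ∀ x y, 0 ≤ b x y) (hd0 : ∀ x y, 0 ≤ d x y)
    (hI : ∀ x, ∑ y ∈ S, b x y * d x y ^ 2 ≤ m x) {a : X → ℝ} (ha : ∀ x, 0 ≤ a x)
    {e : X × X → ℝ} (he : ∀ q, 0 ≤ e q) :
    ∑ q ∈ S ×ˢ S, b q.1 q.2 * d q.1 q.2 * a q.1 * e q
      ≤ √(∑ x ∈ S, a x ^ 2 * m x) * √(∑ q ∈ S ×ˢ S, b q.1 q.2 * e q ^ 2) := calc
  _ = ∑ q ∈ S ×ˢ S, √(b q.1 q.2 * d q.1 q.2 ^ 2 * a q.1 ^ 2) * √(b q.1 q.2 * e q ^ 2) := by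
    refine sum_congr rfl fun q _ => ?_
    rw [← sqrt_mul (by positivity [hb0 q.1 q.2]),
      show b q.1 q.2 * d q.1 q.2 ^ 2 * a q.1 ^ 2 * (b q.1 q.2 * e q ^ 2)
        = (b q.1 q.2 * d q.1 q.2 * a q.1 * e q) ^ 2 by ring,
      sqrt_sq (by positivity [hb0 q.1 q.2, hd0 q.1 q.2, ha q.1, he q])]
  _ ≤ √(∑ q ∈ S ×ˢ S, b q.1 q.2 * d q.1 q.2 ^ 2 * a q.1 ^ 2)
        * √(∑ q ∈ S ×ˢ S, b q.1 q.2 * e q ^ 2) :=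
    sum_sqrt_mul_sqrt_le _ (fun q => by positivity [hb0 q.1 q.2])
      (fun q => by positivity [hb0 q.1 q.2])
  _ ≤ _ := by gcongr; exact sum_weight_dist_sq_mul_sq_le hI a

end Intrinsic

lemma norm_weight_mul_twistDiff_le {β δ ε s p q : ℝ} (hβ : 0 ≤ β) (hjump : 0 < β → δ ≤ s)
    (hδ : 0 ≤ δ) (hε1 : ε ≤ 1) (hpq : |p - q| ≤ ε * δ) (z w : ℂ) :
    ‖(β : ℂ) * twistDiff p q z w‖
      ≤ exp (2 * s) * (2 * ε * (β * δ * ‖z‖ * ‖z - w‖) + ε ^ 2 * (β * δ ^ 2 * (‖z‖ * ‖w‖))) := by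
  rw [norm_mul, Complex.norm_real, Real.norm_eq_abs, abs_of_nonneg hβ]
  rcases hβ.eq_or_lt with rfl | hβ
  · simp
  have hr : 0 ≤ ε * δ := (abs_nonneg _).trans hpq
  have hexp : exp (2 * (ε * δ)) ≤ exp (2 * s) := by
    gcongr; nlinarith [hjump hβ]
  calc β * ‖twistDiff p q z w‖
      ≤ β * (exp (2 * (ε * δ)) * (2 * (ε * δ) * ‖z‖ * ‖z - w‖ + (ε * δ) ^ 2 * (‖z‖ * ‖w‖))) :=
        mul_le_mul_of_nonneg_left (norm_twistDiff_le hpq z w) hβ.le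
    _ ≤ β * (exp (2 * s) * (2 * (ε * δ) * ‖z‖ * ‖z - w‖ + (ε * δ) ^ 2 * (‖z‖ * ‖w‖))) := by
        gcongr
    _ = _ := by ring

lemma norm_sum_weight_mul_twistDiff_le {X : Type*} {b d : X → X → ℝ} {m ψ : X → ℝ}
    {S : Finset X} {s ε : ℝ} (hb0 : ∀ x y, 0 ≤ b x y) (hsymm : ∀ x y, b x y = b y x)
    (hd0 : ∀ x y, 0 ≤ d x y) (hdsymm : ∀ x y, d x y = d y x)
    (hI : ∀ x, ∑ y ∈ S, b x y * d x y ^ 2 ≤ m x) (hjump : ∀ x y, 0 < b x y → d x y ≤ s)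
    (hε : 0 ≤ ε) (hε1 : ε ≤ 1) (hψ : ∀ x y, ψ x - ψ y ≤ ε * d x y) (f : X → ℂ) :
    ‖∑ q ∈ S ×ˢ S, (b q.1 q.2 : ℂ) * twistDiff (ψ q.1) (ψ q.2) (f q.1) (f q.2)‖
      ≤ exp (2 * s) * (2 * ε * √(∑ x ∈ S, ‖f x‖ ^ 2 * m x)
            * √(∑ q ∈ S ×ˢ S, b q.1 q.2 * ‖f q.1 - f q.2‖ ^ 2)
          + ε ^ 2 * ∑ x ∈ S, ‖f x‖ ^ 2 * m x) := by
  have hedge (q : X × X) := norm_weight_mul_twistDiff_le (hb0 q.1 q.2) (hjump q.1 q.2)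
    (hd0 q.1 q.2) hε1 (abs_sub_le_iff.mpr ⟨hψ q.1 q.2, hdsymm q.1 q.2 ▸ hψ q.2 q.1⟩)
    (f q.1) (f q.2)
  have hlin := sum_weight_dist_mul_mul_le hb0 hd0 hI (fun x => norm_nonneg (f x))
    (e := fun q => ‖f q.1 - f q.2‖) fun q => norm_nonneg _
  have hquad := sum_weight_dist_sq_mul_mul_le hsymm hdsymm hb0 hI fun x => ‖f x‖
  refine (norm_sum_le _ _).trans <| (sum_le_sum fun q _ => hedge q).trans ?_
  rw [← mul_sum, sum_add_distrib, ← mul_sum, ← mul_sum]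
  refine mul_le_mul_of_nonneg_left ?_ (exp_pos _).le
  linarith [mul_le_mul_of_nonneg_left hlin (by positivity : 0 ≤ 2 * ε),
    mul_le_mul_of_nonneg_left hquad (sq_nonneg ε)]

lemma l2norm_eq_sqrt_sum {X : Type*} {S : Finset X} {f : X → ℂ} (hf : ∀ x ∉ S, f x = 0)
    (m : X → ℝ) : l2norm m f = √(∑ x ∈ S, ‖f x‖ ^ 2 * m x) := by
  rw [l2norm, tsum_eq_sum fun x hx => by simp [hf x hx]]

theorem stmt10_general (s : ℝ) :
    ∃ C : ℝ, 0 < C ∧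
      ∀ (X : Type) (_ : Countable X)
        (b : X → X → ℝ) (c : X → ℝ) (m : X → ℝ) (d : X → X → ℝ),
        (∀ x y, b x y = b y x) → (∀ x, b x x = 0) → (∀ x y, 0 ≤ b x y) →
        (∀ x, Summable (b x)) → (∀ x, 0 < ∑' y, b x y) →
        (∀ x, 0 ≤ c x) → (∀ x, 0 < m x) →
        (∀ x y, 0 ≤ d x y) → (∀ x y, d x y = d y x) → (∀ x, d x x = 0) →
        (∀ x y z, d x z ≤ d x y + d y z) →
        -- intrinsic metric: ∑_y b(x,y) d(x,y)² ≤ m(x)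
        (∀ x, (∑' y : X, ENNReal.ofReal (b x y * d x y ^ 2)) ≤ ENNReal.ofReal (m x)) →
        -- jump size at most s
        (∀ x y, 0 < b x y → d x y ≤ s) →
        ∀ ε : ℝ, 0 < ε → ε ≤ 1 →
        ∀ ψ : X → ℝ, (∃ K : ℝ, ∀ x, |ψ x| ≤ K) → (∀ x y, ψ x - ψ y ≤ ε * d x y) →
        ∀ f : X → ℂ, (Function.support f).Finite →
        ‖graphForm b c (fun x => (Real.exp (-ψ x) : ℂ) * f x)
            (fun x => (Real.exp (ψ x) : ℂ) * f x) - graphForm b c f f‖ ≤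
          C * ε ^ 2 * l2norm m f ^ 2 +
            C * ε * l2norm m f * Real.sqrt (graphForm b c f f).re := by
  refine ⟨2 * exp (2 * s), by positivity, ?_⟩
  intro X _ b c m d hsymm _ hb0 hb _ hc hm hd0 hdsymm _ _ hintr hjump ε hε hε1 ψ _ hψ f hf
  set S := hf.toFinset
  have hfS : ∀ x ∉ S, f x = 0 := fun x hx => by simpa [S] using hx
  have hI (x : X) : ∑ y ∈ S, b x y * d x y ^ 2 ≤ m x :=
    sum_le_of_tsum_ofReal_le (fun y => mul_nonneg (hb0 x y) (sq_nonneg _)) (hm x).le (hintr x) S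
  have hbound := norm_sum_weight_mul_twistDiff_le hb0 hsymm hd0 hdsymm hI hjump hε.le hε1 hψ f
  have hE : √(∑ q ∈ S ×ˢ S, b q.1 q.2 * ‖f q.1 - f q.2‖ ^ 2) ≤ 2 * √(graphForm b c f f).re :=
    calc _ ≤ √(2 * (graphForm b c f f).re) :=
          sqrt_le_sqrt (sum_weight_mul_norm_sub_sq_le hb0 hsymm hb hc hfS)
      _ ≤ 2 * √(graphForm b c f f).re := by
          rw [sqrt_mul zero_le_two]
          gcongr
          exact sqrt_le_iff.mpr ⟨zero_le_two, by norm_num⟩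
  have hN : 0 ≤ ∑ x ∈ S, ‖f x‖ ^ 2 * m x := sum_nonneg fun x _ => by positivity [(hm x).le]
  rw [graphForm_twist_sub hb0 hsymm hb hfS, norm_mul, l2norm_eq_sqrt_sum hfS, sq_sqrt hN]
  set N := ∑ x ∈ S, ‖f x‖ ^ 2 * m x
  set Q := (graphForm b c f f).re
  calc ‖(1 / 2 : ℂ)‖ * ‖∑ q ∈ S ×ˢ S, (b q.1 q.2 : ℂ) * twistDiff (ψ q.1) (ψ q.2) (f q.1) (f q.2)‖
      ≤ 1 / 2 * (exp (2 * s) * (2 * ε * √N * (2 * √Q) + ε ^ 2 * N)) := by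
        norm_num
        exact hbound.trans (by gcongr)
    _ ≤ 2 * exp (2 * s) * ε ^ 2 * N + 2 * exp (2 * s) * ε * √N * √Q := by
        nlinarith [mul_nonneg (mul_nonneg (exp_pos (2 * s)).le (sq_nonneg ε)) hN]

/-- Let `d` be an intrinsic pseudo metric with jump size at most `s < ∞`.
There is `C > 0`, depending only on `s`, such that for every `ε ∈ (0,1]`, every `ψ ∈ Lip_ε`
and every finitely supported `f : X → ℂ`:
`|Q(e^{-ψ} f, e^{ψ} f) - Q(f,f)| ≤ C ε² ‖f‖₂² + C ε ‖f‖₂ Q(f)^{1/2}`. -/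
theorem stmt10 (s : ℝ) (hs : 0 ≤ s) :
    ∃ C : ℝ, 0 < C ∧
      ∀ (X : Type) (_ : Countable X)
        (b : X → X → ℝ) (c : X → ℝ) (m : X → ℝ) (d : X → X → ℝ),
        (∀ x y, b x y = b y x) → (∀ x, b x x = 0) → (∀ x y, 0 ≤ b x y) →
        (∀ x, Summable (b x)) → (∀ x, 0 < ∑' y, b x y) →
        (∀ x, 0 ≤ c x) → (∀ x, 0 < m x) →
        (∀ x y, 0 ≤ d x y) → (∀ x y, d x y = d y x) → (∀ x, d x x = 0) →
        (∀ x y z, d x z ≤ d x y + d y z) →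
        -- intrinsic metric: ∑_y b(x,y) d(x,y)² ≤ m(x)
        (∀ x, (∑' y : X, ENNReal.ofReal (b x y * d x y ^ 2)) ≤ ENNReal.ofReal (m x)) →
        -- jump size at most s
        (∀ x y, 0 < b x y → d x y ≤ s) →
        ∀ ε : ℝ, 0 < ε → ε ≤ 1 →
        ∀ ψ : X → ℝ, (∃ K : ℝ, ∀ x, |ψ x| ≤ K) → (∀ x y, ψ x - ψ y ≤ ε * d x y) →
        ∀ f : X → ℂ, (Function.support f).Finite →
        ‖graphForm b c (fun x => (Real.exp (-ψ x) : ℂ) * f x)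
            (fun x => (Real.exp (ψ x) : ℂ) * f x) - graphForm b c f f‖ ≤
          C * ε ^ 2 * l2norm m f ^ 2 +
            C * ε * l2norm m f * Real.sqrt (graphForm b c f f).re :=
  stmt10_general s
end

section
/- Assume m = n and that the graph is bipartite, i.e. X is the disjoint union of sets X₁ and X₂ such that b(x,y) > 0 implies (x,y) ∈ (X₁ × X₂) ∪ (X₂ × X₁). Then for every p ∈ [1,∞] the spectrum of the normalized Laplacian is symmetric with respect to the line {z ∈ ℂ : Re z = 1}: λ ∈ σ(L_p) if and only if 2 − λ ∈ σ(L_p). -/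
/-!
Let `ε = 1` on `X₁` and `ε = -1` off `X₁`. Multiplication by `ε` is an involution `U` of
`ℓ^p(X, n)`, and since every edge joins `X₁` to `X₂` we have `ε(x) ε(y) = -1` whenever
`b(x,y) ≠ 0`, so that
`ε(x) ∑_y b(x,y) (ε(x) f(x) - ε(y) f(y)) = ∑_y b(x,y) (f(x) + f(y))`
`= 2 n(x) f(x) - ∑_y b(x,y) (f(x) - f(y))`, i.e. `U L U = 2 - L`. Conjugate operators have
the same spectrum, and `σ(2 - L) = 2 - σ(L)`.
The series converge because the measure with weights `b(x, ·)` is finite and dominated by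
the measure with weights `n`, hence `ℓ^p(X, n) ⊆ L¹(b(x, ·))`.
-/

open MeasureTheory
open scoped ENNReal Pointwise

theorem spectrum.mem_iff_sub_mem_of_units_conj {R A : Type*} [CommRing R] [Ring A]
    [Algebra R A] {a : A} {u : Aˣ} {r : R} (h : u * a * ↑u⁻¹ = algebraMap R A r - a) (z : R) :
    z ∈ spectrum R a ↔ r - z ∈ spectrum R a := by
  have hσ : spectrum R a = ({r} : Set R) - spectrum R a := by
    rw [spectrum.singleton_sub_eq, ← h, spectrum.units_conjugate]
  conv_lhs => rw [hσ]
  rw [Set.singleton_sub, Set.mem_image]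
  exact ⟨fun ⟨w, hw, hwz⟩ => by rwa [← hwz, sub_sub_cancel],
    fun h => ⟨r - z, h, sub_sub_cancel r z⟩⟩

section WeightedCount

variable {X : Type*} [MeasurableSpace X]

noncomputable def weightedCount (w : X → ℝ) : Measure X :=
  Measure.sum fun x => ENNReal.ofReal (w x) • Measure.dirac x

variable {w v : X → ℝ}

theorem weightedCount_singleton [MeasurableSingletonClass X] (x : X) :
    weightedCount w {x} = ENNReal.ofReal (w x) := by
  rw [weightedCount, Measure.sum_apply _ (measurableSet_singleton x),
    tsum_eq_single x fun y hy => by simp [hy]]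
  simp

theorem ae_weightedCount_iff [Countable X] [MeasurableSingletonClass X] (hw : ∀ x, 0 < w x)
    {P : X → Prop} :
    (∀ᵐ x ∂weightedCount w, P x) ↔ ∀ x, P x := by
  simp [ae_iff_of_countable, weightedCount_singleton, hw]

theorem lintegral_weightedCount [MeasurableSingletonClass X] (g : X → ℝ≥0∞) :
    ∫⁻ x, g x ∂weightedCount w = ∑' x, ENNReal.ofReal (w x) * g x := by
  simp [weightedCount, lintegral_sum_measure, lintegral_smul_measure, lintegral_dirac]

theorem weightedCount_mono (h : ∀ x, w x ≤ v x) : weightedCount w ≤ weightedCount v :=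
  Measure.le_intro fun s hs _ => by
    simp only [weightedCount, Measure.sum_apply _ hs, Measure.smul_apply, smul_eq_mul]
    exact ENNReal.tsum_le_tsum fun x => by gcongr; exact h x

theorem isFiniteMeasure_weightedCount [MeasurableSingletonClass X] (hw0 : ∀ x, 0 ≤ w x)
    (hw : Summable w) : IsFiniteMeasure (weightedCount w) := by
  constructor
  rw [← lintegral_one, lintegral_weightedCount]
  simp only [mul_one]
  rw [← ENNReal.ofReal_tsum_of_nonneg hw0 hw]
  exact ENNReal.ofReal_lt_top

theorem summable_smul_of_memLp [MeasurableSingletonClass X] {E : Type*} [NormedAddCommGroup E]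
    [NormedSpace ℝ E] [CompleteSpace E] {p : ℝ≥0∞} (hp : 1 ≤ p) (hw0 : ∀ x, 0 ≤ w x)
    (hw : Summable w) (hwv : ∀ x, w x ≤ v x) {f : X → E} (hf : MemLp f p (weightedCount v)) :
    Summable fun x => w x • f x := by
  have := isFiniteMeasure_weightedCount hw0 hw
  have hfin := ((hf.mono_measure (weightedCount_mono hwv)).integrable hp).hasFiniteIntegral
  rw [HasFiniteIntegral, lintegral_weightedCount] at hfin
  refine Summable.of_norm ((ENNReal.summable_toReal hfin.ne).congr fun x => ?_)
  rw [ENNReal.toReal_mul, ENNReal.toReal_ofReal (hw0 x), toReal_enorm, norm_smul,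
    Real.norm_of_nonneg (hw0 x)]

end WeightedCount

theorem MeasureTheory.Lp.exists_mulOperator_of_mul_self_eq_one {X : Type*} [MeasurableSpace X]
    {μ : Measure X} {p : ℝ≥0∞} [Fact (1 ≤ p)] {e : X → ℂ} (he_meas : AEStronglyMeasurable e μ)
    (he : ∀ x, e x * e x = 1) :
    ∃ U : Lp ℂ p μ →L[ℂ] Lp ℂ p μ, U * U = 1 ∧ ∀ f, U f =ᵐ[μ] fun x => e x * f x := by
  have he_norm (x : X) : ‖e x‖ = 1 := by
    have := congrArg norm (he x)
    rw [norm_mul, norm_one, mul_self_eq_one_iff] at this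
    exact this.resolve_right (by linarith [norm_nonneg (e x)])
  have he_mem : MemLp e ∞ μ := memLp_top_of_bound he_meas 1 (.of_forall fun x => (he_norm x).le)
  let U := (ContinuousLinearMap.mul ℂ ℂ).holderL μ ∞ p p he_mem.toLp
  have hU (f : Lp ℂ p μ) : U f =ᵐ[μ] fun x => e x * f x := by
    filter_upwards [(ContinuousLinearMap.mul ℂ ℂ).coeFn_holder (r := p) he_mem.toLp f,
      he_mem.coeFn_toLp] with x hUx hex
    simp [U, hUx, hex]
  refine ⟨U, ContinuousLinearMap.ext fun f => Lp.ext ?_, hU⟩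
  filter_upwards [hU (U f), hU f] with x h1 h2
  simp [h1, h2, ← mul_assoc, he x]

section Laplacian

variable {X : Type*}

noncomputable def normalizedLaplacian (b : X → X → ℝ) (n : X → ℝ) (f : X → ℂ) (x : X) : ℂ :=
  (n x : ℂ)⁻¹ * ∑' y, (b x y : ℂ) * (f x - f y)

theorem mul_normalizedLaplacian_mul_of_sign {b : X → X → ℝ} {n : X → ℝ} {e f : X → ℂ} {x : X}
    (hn : HasSum (b x) (n x)) (hnx : n x ≠ 0) (hf : Summable fun y => b x y • f y)
    (he_sq : e x * e x = 1) (he : ∀ y, b x y ≠ 0 → e x * e y = -1) :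
    e x * normalizedLaplacian b n (fun y => e y * f y) x =
      2 * f x - normalizedLaplacian b n f x := by
  have hnC : HasSum (fun y => (b x y : ℂ) * f x) (n x * f x) :=
    (Complex.hasSum_ofReal.mpr hn).mul_right (f x)
  have hfC : Summable fun y => (b x y : ℂ) * f y := by simpa only [Complex.real_smul] using hf
  have hterm (y : X) :
      e x * ((b x y : ℂ) * (e x * f x - e y * f y)) = b x y * f x + b x y * f y := by
    by_cases hb : b x y = 0
    · simp [hb]
    · linear_combination (b x y : ℂ) * f x * he_sq - (b x y : ℂ) * f y * he y hb
  have hsign :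
      e x * ∑' y, (b x y : ℂ) * (e x * f x - e y * f y) = n x * f x + ∑' y, b x y * f y := by
    rw [← tsum_mul_left, tsum_congr hterm, (hnC.add hfC.hasSum).tsum_eq]
  have hplain : ∑' y, (b x y : ℂ) * (f x - f y) = n x * f x - ∑' y, b x y * f y := by
    simp only [mul_sub]
    exact (hnC.sub hfC.hasSum).tsum_eq
  have hnxC : (n x : ℂ) ≠ 0 := Complex.ofReal_ne_zero.mpr hnx
  unfold normalizedLaplacian
  rw [mul_left_comm, hsign, hplain]
  field_simp
  ring

end Laplacian

section BipartiteSign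

variable {X : Type*}

open Classical in
noncomputable def bipartiteSign (A : Set X) (x : X) : ℂ := if x ∈ A then 1 else -1

theorem bipartiteSign_mul_self (A : Set X) (x : X) :
    bipartiteSign A x * bipartiteSign A x = 1 := by
  unfold bipartiteSign; split_ifs <;> norm_num

theorem bipartiteSign_mul_eq_neg_one {A B : Set X} (hAB : Disjoint A B) {x y : X}
    (h : (x ∈ A ∧ y ∈ B) ∨ (x ∈ B ∧ y ∈ A)) : bipartiteSign A x * bipartiteSign A y = -1 := by
  rcases h with ⟨hx, hy⟩ | ⟨hx, hy⟩
  · simp [bipartiteSign, hx, Set.disjoint_right.mp hAB hy]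
  · simp [bipartiteSign, hy, Set.disjoint_right.mp hAB hx]

end BipartiteSign

theorem stmt14_general {X : Type*} [Countable X] [MeasurableSpace X] [MeasurableSingletonClass X]
    (b : X → X → ℝ)
    (hb_symm : ∀ x y, b x y = b y x)
    (hb_nonneg : ∀ x y, 0 ≤ b x y)
    (n : X → ℝ) (hn : ∀ x, HasSum (b x) (n x)) (hn_pos : ∀ x, 0 < n x)
    (X₁ X₂ : Set X)
    (hdisj : Disjoint X₁ X₂)
    (hbip : ∀ x y, 0 < b x y → (x ∈ X₁ ∧ y ∈ X₂) ∨ (x ∈ X₂ ∧ y ∈ X₁))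
    (μ : Measure X)
    (hμ : μ = Measure.sum fun x => ENNReal.ofReal (n x) • Measure.dirac x)
    (p : ℝ≥0∞) [Fact (1 ≤ p)]
    (L : Lp ℂ p μ →L[ℂ] Lp ℂ p μ)
    (hL : ∀ f : Lp ℂ p μ, ∀ᵐ x ∂μ,
      (L f : X → ℂ) x =
        (n x : ℂ)⁻¹ * ∑' y : X, (b x y : ℂ) * ((f : X → ℂ) x - (f : X → ℂ) y)) :
    ∀ lam : ℂ, lam ∈ spectrum ℂ L ↔ 2 - lam ∈ spectrum ℂ L := by
  replace hμ : μ = weightedCount n := hμ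
  subst hμ
  have h_ae {P : X → Prop} (h : ∀ᵐ x ∂weightedCount n, P x) (x : X) : P x :=
    (ae_weightedCount_iff hn_pos).mp h x
  have hLf (f : Lp ℂ p (weightedCount n)) : ⇑(L f) = normalizedLaplacian b n f :=
    funext (h_ae (hL f))
  set e := bipartiteSign X₁
  obtain ⟨U, hUU, hU⟩ := Lp.exists_mulOperator_of_mul_self_eq_one (p := p)
    (measurable_of_countable e).aestronglyMeasurable (bipartiteSign_mul_self X₁)
  have hb_le (x y : X) : b x y ≤ n y := by
    rw [hb_symm]
    exact le_hasSum (hn y) x fun z _ => hb_nonneg y z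
  have hconj : (⟨U, U, hUU, hUU⟩ : (Lp ℂ p (weightedCount n) →L[ℂ] Lp ℂ p (weightedCount n))ˣ)
      * L * U = algebraMap ℂ _ 2 - L := by
    ext1 f
    rw [mul_apply_eq_comp, mul_apply_eq_comp, sub_apply, Algebra.algebraMap_eq_smul_one,
      smul_apply, one_apply_eq_self]
    refine Lp.ext ?_
    filter_upwards [hU (L (U f)), Lp.coeFn_sub ((2 : ℂ) • f) (L f), Lp.coeFn_smul (2 : ℂ) f]
      with x hULUf hsub hsmul
    rw [hULUf, hsub, Pi.sub_apply, hsmul, Pi.smul_apply, smul_eq_mul, hLf, hLf,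
      funext (h_ae (hU f))]
    exact mul_normalizedLaplacian_mul_of_sign (hn x) (hn_pos x).ne'
      (summable_smul_of_memLp Fact.out (hb_nonneg x) (hn x).summable (hb_le x) (Lp.memLp f))
      (bipartiteSign_mul_self X₁ x)
      fun y hb => bipartiteSign_mul_eq_neg_one hdisj (hbip x y ((hb_nonneg x y).lt_of_ne' hb))
  exact spectrum.mem_iff_sub_mem_of_units_conj hconj

/-- Assume `m = n` and that the graph is bipartite: `X = X₁ ∪ X₂` with
`X₁, X₂` disjoint and `b(x,y) > 0` implying `(x,y) ∈ (X₁ × X₂) ∪ (X₂ × X₁)`. Then for every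
`p ∈ [1,∞]` the spectrum of the normalized Laplacian on `ℓ^p(X,n)` is symmetric with respect
to the line `{Re z = 1}`: `λ ∈ σ(L_p)` iff `2 - λ ∈ σ(L_p)`. Here `ℓ^p(X,n)` is realized as
`Lp ℂ p μ` for the weighted counting measure `μ = ∑_x n(x) δ_x`. -/
theorem stmt14 {X : Type*} [Countable X] [MeasurableSpace X] [MeasurableSingletonClass X]
    (b : X → X → ℝ)
    (hb_symm : ∀ x y, b x y = b y x)
    (hb_diag : ∀ x, b x x = 0)
    (hb_nonneg : ∀ x y, 0 ≤ b x y)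
    (n : X → ℝ) (hn : ∀ x, HasSum (b x) (n x)) (hn_pos : ∀ x, 0 < n x)
    (X₁ X₂ : Set X)
    (hdisj : Disjoint X₁ X₂) (hcover : X₁ ∪ X₂ = Set.univ)
    (hbip : ∀ x y, 0 < b x y → (x ∈ X₁ ∧ y ∈ X₂) ∨ (x ∈ X₂ ∧ y ∈ X₁))
    (μ : Measure X)
    (hμ : μ = Measure.sum fun x => ENNReal.ofReal (n x) • Measure.dirac x)
    (p : ℝ≥0∞) [Fact (1 ≤ p)]
    (L : Lp ℂ p μ →L[ℂ] Lp ℂ p μ)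
    (hL : ∀ f : Lp ℂ p μ, ∀ᵐ x ∂μ,
      (L f : X → ℂ) x =
        (n x : ℂ)⁻¹ * ∑' y : X, (b x y : ℂ) * ((f : X → ℂ) x - (f : X → ℂ) y)) :
    ∀ lam : ℂ, lam ∈ spectrum ℂ L ↔ 2 - lam ∈ spectrum ℂ L :=
  stmt14_general b hb_symm hb_nonneg n hn hn_pos X₁ X₂ hdisj hbip μ hμ p L hL
end

section
/- Assume m = n and that the Cheeger constant α is strictly positive. Then the operator I − L₁, i.e. the transition operator P acting on ℓ¹(X,n) by (P f)(x) = (1/n(x)) ∑_{y∈X} b(x,y) f(y), is not a compact operator. -/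
/-!
If `P` were compact, the Cesàro means of the `P`-orbit of a probability density would have a
convergent subsequence, and its limit `h` would be a `P`-invariant probability density, i.e. a
nonnegative, summable, nonzero harmonic function. For such an `h` the truncations `min h c` are
superharmonic with the same total mass as their images (by symmetry of `b`), hence harmonic; this
forces `h` to be constant along edges. A superlevel set `{h ≥ h x}` is then a set without
outgoing edges and of finite volume, and exhausting it by finite sets violates the Cheeger
inequality `α n(W) ≤ |∂W|` with `α > 0`.
-/

open Filter MeasureTheory Topology
open scoped ComplexOrder

structure IsWeightedGraph {X : Type*} (b : X → X → ℝ) (n : X → ℝ) : Prop where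
  symm : ∀ x y, b x y = b y x
  nonneg : ∀ x y, 0 ≤ b x y
  hasSum_degree : ∀ x, HasSum (b x) (n x)

def IsHarmonic {X : Type*} (b : X → X → ℝ) (n : X → ℝ) (H : X → ℝ) : Prop :=
  ∀ x, ∑' y, b x y * H y = n x * H x

namespace IsWeightedGraph

variable {X : Type*} {b : X → X → ℝ} {n : X → ℝ} (G : IsWeightedGraph b n)
include G

theorem degree_nonneg (x : X) : 0 ≤ n x :=
  (G.hasSum_degree x).nonneg fun y => G.nonneg x y

theorem edge_le_degree (x y : X) : b x y ≤ n y :=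
  G.symm x y ▸ le_hasSum (G.hasSum_degree y) x fun z _ => G.nonneg y z

theorem summable_edge_mul {g : X → ℝ} (hg : ∀ y, 0 ≤ g y)
    (hgs : Summable fun y => n y * g y) (x : X) : Summable fun y => b x y * g y :=
  hgs.of_nonneg_of_le (fun y => mul_nonneg (G.nonneg x y) (hg y))
    fun y => mul_le_mul_of_nonneg_right (G.edge_le_degree x y) (hg y)

theorem summable_degree_mul_min {H : X → ℝ} (hH : ∀ x, 0 ≤ H x)
    (hHs : Summable fun x => n x * H x) {c : ℝ} (hc : 0 ≤ c) :
    Summable fun x => n x * min (H x) c :=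
  hHs.of_nonneg_of_le (fun x => mul_nonneg (G.degree_nonneg x) (le_min (hH x) hc))
    fun x => mul_le_mul_of_nonneg_left (min_le_left _ _) (G.degree_nonneg x)

theorem tsum_tsum_edge_smul {E : Type*} [NormedAddCommGroup E] [NormedSpace ℝ E]
    [CompleteSpace E] {f : X → E} (hf : Summable fun y => n y * ‖f y‖) :
    ∑' x, ∑' y, b x y • f y = ∑' y, n y • f y := by
  have hcol : ∀ y, HasSum (fun x => b x y) (n y) := fun y => by
    simpa only [G.symm _ y] using G.hasSum_degree y
  have hnorm : Summable fun p : X × X => b p.2 p.1 * ‖f p.1‖ := by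
    rw [summable_prod_of_nonneg fun p => mul_nonneg (G.nonneg _ _) (norm_nonneg _)]
    refine ⟨fun y => (hcol y).summable.mul_right ‖f y‖, hf.congr fun y => ?_⟩
    simp only [tsum_mul_right, (hcol y).tsum_eq]
  have hsum : Summable fun p : X × X => b p.1 p.2 • f p.2 := by
    refine Summable.of_norm ?_
    simpa only [norm_smul, Real.norm_of_nonneg (G.nonneg _ _), Prod.fst_swap, Prod.snd_swap]
      using hnorm.prod_symm
  rw [← hsum.tsum_comm]
  exact tsum_congr fun y => by rw [(hcol y).summable.tsum_smul_const, (hcol y).tsum_eq]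

theorem boundary_le_tsum_indicator_sub {C : Set X} (hC : ∀ x ∈ C, ∀ y ∉ C, b x y = 0)
    (hCs : Summable (C.indicator n)) {W : Finset X} (hW : ↑W ⊆ C) :
    ∑ x ∈ W, ∑' y : {y : X // y ∉ W}, b x y ≤ ∑' x, C.indicator n x - ∑ x ∈ W, n x := by
  have hrow : ∀ x ∈ W, Summable fun y : {y : X // y ∉ W} => b x y :=
    fun x _ => (G.hasSum_degree x).summable.subtype _
  have hcol : ∀ y, ∑ x ∈ W, b x y ≤ C.indicator n y := fun y => by
    by_cases hy : y ∈ C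
    · simpa only [Set.indicator_of_mem hy, G.symm _ y] using
        sum_le_hasSum W (fun z _ => G.nonneg y z) (G.hasSum_degree y)
    · rw [Set.indicator_of_notMem hy, Finset.sum_eq_zero fun x hx => hC x (hW hx) y hy]
  have hWC : ∑ x ∈ W, C.indicator n x = ∑ x ∈ W, n x :=
    Finset.sum_congr rfl fun x hx => Set.indicator_of_mem (hW hx) n
  rw [← hCs.sum_add_tsum_subtype_compl W, hWC, add_sub_cancel_left,
    ← Summable.tsum_finsetSum hrow]
  exact (summable_sum hrow).tsum_le_tsum (fun y => hcol y) (hCs.subtype _)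

/-- Exhausting an edge-closed set `C` of finite volume by finite sets `W`, the boundary of `W`
is at most the volume of `C \ W`, which drops below `α n(W)` once `W` is large. -/
theorem not_summable_indicator_of_cheeger {α : ℝ} (hα : 0 < α)
    (hcheeger : ∀ W : Finset X, α * ∑ x ∈ W, n x ≤ ∑ x ∈ W, ∑' y : {y : X // y ∉ W}, b x y)
    {C : Set X} (hC : ∀ x ∈ C, ∀ y ∉ C, b x y = 0) {x₀ : X} (hx₀ : x₀ ∈ C) (hn₀ : 0 < n x₀) :
    ¬ Summable (C.indicator n) := by
  intro hCs
  set T := ∑' x, C.indicator n x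
  have hT : 0 < T := hn₀.trans_le <| by
    simpa only [Set.indicator_of_mem hx₀] using
      hCs.le_tsum x₀ fun x _ => Set.indicator_nonneg (fun y _ => G.degree_nonneg y) x
  obtain ⟨W₀, hW₀⟩ : ∃ W₀ : Finset X, T / (1 + α) < ∑ x ∈ W₀, C.indicator n x := by
    by_contra! h
    have := hCs.tsum_le_of_sum_le h
    rw [le_div_iff₀ (by linarith)] at this
    nlinarith
  classical
  set W := W₀.filter (· ∈ C)
  have hWC : ↑W ⊆ C := fun x hx => (Finset.mem_filter.1 hx).2
  have hW : ∑ x ∈ W, n x = ∑ x ∈ W₀, C.indicator n x := by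
    simp only [W, Finset.sum_filter, Set.indicator_apply]
  have := (hcheeger W).trans (G.boundary_le_tsum_indicator_sub hC hCs hWC)
  rw [div_lt_iff₀ (by linarith)] at hW₀
  nlinarith

end IsWeightedGraph

namespace IsHarmonic

variable {X : Type*} {b : X → X → ℝ} {n : X → ℝ} {H : X → ℝ} (harm : IsHarmonic b n H)
  (G : IsWeightedGraph b n) (hH : ∀ x, 0 ≤ H x) (hHs : Summable fun x => n x * H x)
include harm G hH hHs

/-- Truncation makes `H` superharmonic, and by symmetry of `b` both sides of the
superharmonicity inequality have the same total sum `∑ₓ n x g x`, so none of them is strict. -/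
theorem min_const {c : ℝ} (hc : 0 ≤ c) :
    IsHarmonic b n fun x => min (H x) c := by
  set g : X → ℝ := fun x => min (H x) c
  have hg : ∀ x, 0 ≤ g x := fun x => le_min (hH x) hc
  have hgs : Summable fun x => n x * g x := G.summable_degree_mul_min hH hHs hc
  have hsuper : ∀ x, ∑' y, b x y * g y ≤ n x * g x := fun x => by
    have hbg := G.summable_edge_mul hg hgs x
    rw [mul_min_of_nonneg _ _ (G.degree_nonneg x), le_min_iff, ← harm x,
      ← (G.hasSum_degree x).tsum_eq, ← tsum_mul_right]
    exact ⟨hbg.tsum_le_tsum (fun y => mul_le_mul_of_nonneg_left (min_le_left _ _)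
        (G.nonneg x y)) (G.summable_edge_mul hH hHs x),
      hbg.tsum_le_tsum (fun y => mul_le_mul_of_nonneg_left (min_le_right _ _) (G.nonneg x y))
        ((G.hasSum_degree x).summable.mul_right c)⟩
  have htotal : ∑' x, ∑' y, b x y * g y = ∑' x, n x * g x := by
    simpa only [smul_eq_mul] using
      G.tsum_tsum_edge_smul (f := g) (by simpa only [Real.norm_of_nonneg (hg _)] using hgs)
  intro x
  by_contra hx
  refine (Summable.tsum_lt_tsum hsuper ((hsuper x).lt_of_ne hx) ?_ hgs).ne htotal
  exact hgs.of_nonneg_of_le (fun x => tsum_nonneg fun y => mul_nonneg (G.nonneg x y) (hg y))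
    hsuper

theorem eq_of_edge_pos {x y : X} (hxy : 0 < b x y) : H x = H y := by
  suffices key : ∀ x y, 0 < b x y → ¬ H x < H y from
    le_antisymm (not_lt.1 (key y x (G.symm x y ▸ hxy))) (not_lt.1 (key x y hxy))
  intro x y hxy hlt
  obtain ⟨c, hxc, hcy⟩ := exists_between hlt
  have hc : 0 ≤ c := (hH x).trans hxc.le
  have htrunc : ∑' z, b x z * min (H z) c = n x * min (H x) c :=
    harm.min_const G hH hHs hc x
  rw [min_eq_left hxc.le, ← harm x] at htrunc
  refine (Summable.tsum_lt_tsum (i := y) (fun z => mul_le_mul_of_nonneg_left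
    (min_le_left _ c) (G.nonneg x z)) ?_ ?_ (G.summable_edge_mul hH hHs x)).ne htrunc
  · rw [min_eq_right hcy.le]
    exact mul_lt_mul_of_pos_left hcy hxy
  · exact G.summable_edge_mul (fun z => le_min (hH z) hc)
      (G.summable_degree_mul_min hH hHs hc) x

theorem eq_zero_of_cheeger (hn_pos : ∀ x, 0 < n x) {α : ℝ} (hα : 0 < α)
    (hcheeger : ∀ W : Finset X, α * ∑ x ∈ W, n x ≤ ∑ x ∈ W, ∑' y : {y : X // y ∉ W}, b x y)
    (x : X) : H x = 0 := by
  by_contra hx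
  have hx_pos : 0 < H x := (hH x).lt_of_ne' hx
  set C := {z | H x ≤ H z}
  have hC : ∀ y ∈ C, ∀ z ∉ C, b y z = 0 := fun y hy z hz => by
    by_contra hyz
    exact hz (le_of_le_of_eq hy (harm.eq_of_edge_pos G hH hHs
      ((G.nonneg y z).lt_of_ne' hyz)))
  refine G.not_summable_indicator_of_cheeger hα hcheeger hC (le_refl (H x)) (hn_pos x) ?_
  refine (hHs.mul_left (H x)⁻¹).of_nonneg_of_le
    (Set.indicator_nonneg fun y _ => G.degree_nonneg y) fun y => ?_
  by_cases hy : y ∈ C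
  · rw [Set.indicator_of_mem hy, inv_mul_eq_div, le_div_iff₀ hx_pos]
    exact mul_le_mul_of_nonneg_left hy (G.degree_nonneg y)
  · rw [Set.indicator_of_notMem hy]
    exact mul_nonneg (inv_nonneg.2 hx_pos.le) (mul_nonneg (G.degree_nonneg y) (hH y))

end IsHarmonic

section CesaroMean

variable {E : Type*} [NormedAddCommGroup E] [NormedSpace ℝ E]

noncomputable def cesaroMean (T : E → E) (e : E) (N : ℕ) : E :=
  ((N : ℝ) + 1)⁻¹ • ∑ m ∈ Finset.range (N + 1), T^[m] e

theorem cesaroMean_mem {T : E → E} {S : Set E} (hS : Convex ℝ S) (hTS : Set.MapsTo T S S)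
    {e : E} (he : e ∈ S) (N : ℕ) : cesaroMean T e N ∈ S := by
  rw [cesaroMean, Finset.smul_sum]
  refine hS.sum_mem (fun _ _ => by positivity) ?_ fun m _ => hTS.iterate m he
  rw [Finset.sum_const, Finset.card_range, nsmul_eq_mul]
  push_cast
  exact mul_inv_cancel₀ (by positivity)

theorem ContinuousLinearMap.apply_cesaroMean_sub (T : E →L[ℝ] E) (e : E) (N : ℕ) :
    T (cesaroMean T e N) - cesaroMean T e N = ((N : ℝ) + 1)⁻¹ • (T^[N + 1] e - e) := by
  have htelescope := Finset.sum_range_sub (fun m => T^[m] e) (N + 1)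
  simp only [Function.iterate_succ_apply', Function.iterate_zero_apply] at htelescope
  rw [cesaroMean, map_smul, map_sum, ← smul_sub, ← Finset.sum_sub_distrib, htelescope,
    Function.iterate_succ_apply']

/-- The Cesàro means of an orbit in `S` are almost fixed; compactness of `T` extracts a
convergent subsequence of their images, whose limit is a fixed point. -/
theorem IsCompactOperator.exists_fixedPoint_mem {T : E →L[ℝ] E} (hT : IsCompactOperator T)
    {S : Set E} (hS_conv : Convex ℝ S) (hS_closed : IsClosed S) (hS_bdd : Bornology.IsBounded S)
    (hS_ne : S.Nonempty) (hTS : Set.MapsTo T S S) : ∃ h ∈ S, T h = h := by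
  obtain ⟨e, he⟩ := hS_ne
  obtain ⟨R, hR⟩ := hS_bdd.exists_norm_le
  set A := cesaroMean T e
  have hA : ∀ N, A N ∈ S := cesaroMean_mem hS_conv hTS he
  have hdefect : Tendsto (fun N => T (A N) - A N) atTop (𝓝 0) := by
    refine squeeze_zero_norm (a := fun N : ℕ => (R + R) * (1 / ((N : ℝ) + 1))) (fun N => ?_) ?_
    · rw [T.apply_cesaroMean_sub, norm_smul, Real.norm_of_nonneg (by positivity), mul_comm,
        one_div]
      gcongr
      exact (norm_sub_le _ _).trans (add_le_add (hR _ (hTS.iterate _ he)) (hR _ he))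
    · simpa using tendsto_one_div_add_atTop_nhds_zero_nat.const_mul (R + R)
  obtain ⟨K, hK, hTK⟩ := hT.image_subset_compact_of_bounded hS_bdd
  obtain ⟨h, -, ψ, hψ, hTA⟩ := hK.isSeqCompact fun N => hTK ⟨A N, hA N, rfl⟩
  have hAψ : Tendsto (fun k => A (ψ k)) atTop (𝓝 h) := by
    simpa using hTA.sub (hdefect.comp hψ.tendsto_atTop)
  refine ⟨h, hS_closed.mem_of_tendsto hAψ (Eventually.of_forall fun k => hA (ψ k)), ?_⟩
  exact tendsto_nhds_unique ((T.continuous.tendsto h).comp hAψ) hTA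

end CesaroMean

noncomputable def weightedCounting {X : Type*} [MeasurableSpace X] (n : X → ℝ) : Measure X :=
  Measure.sum fun x => ENNReal.ofReal (n x) • Measure.dirac x

/-- `0 ≤ f x` refers to `ComplexOrder`: `f x` is a nonnegative real. -/
def probabilityDensities {X : Type*} [MeasurableSpace X] (μ : Measure X) : Set (Lp ℂ 1 μ) :=
  {f | (∀ x, 0 ≤ f x) ∧ ∫ x, f x ∂μ = 1}

namespace weightedCounting

variable {X : Type*} [MeasurableSpace X] [MeasurableSingletonClass X] {n : X → ℝ}
  {E : Type*} [NormedAddCommGroup E]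

theorem apply_singleton (x : X) : weightedCounting n {x} = ENNReal.ofReal (n x) :=
  Measure.sum_smul_dirac_singleton

theorem forall_of_ae (hn_pos : ∀ x, 0 < n x) {p : X → Prop}
    (h : ∀ᵐ x ∂weightedCounting n, p x) (x : X) : p x := by
  by_contra hx
  have hnull := measure_mono_null (Set.singleton_subset_iff.2 hx) (ae_iff.1 h)
  rw [apply_singleton, ENNReal.ofReal_eq_zero] at hnull
  exact hnull.not_gt (hn_pos x)

theorem eq_of_ae_eq (hn_pos : ∀ x, 0 < n x) {Y : Type*} {f g : X → Y}
    (h : f =ᵐ[weightedCounting n] g) : f = g :=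
  funext (forall_of_ae hn_pos h)

theorem summable_mul_norm (hn : ∀ x, 0 ≤ n x) (f : Lp E 1 (weightedCounting n)) :
    Summable fun x => n x * ‖f x‖ := by
  simpa only [ENNReal.toReal_ofReal (hn _)] using (L1.integrable_coeFn f).summable_of_dirac

variable [Countable X]

theorem integral_eq_tsum [NormedSpace ℝ E] [FiniteDimensional ℝ E] (hn : ∀ x, 0 ≤ n x)
    (f : X → E) : ∫ x, f x ∂weightedCounting n = ∑' x, n x • f x := by
  simp only [weightedCounting, integral_sum_dirac fun _ => ENNReal.ofReal_ne_top,
    ENNReal.toReal_ofReal (hn _)]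

theorem norm_eq_tsum (hn : ∀ x, 0 ≤ n x) (f : Lp E 1 (weightedCounting n)) :
    ‖f‖ = ∑' x, n x * ‖f x‖ := by
  rw [L1.norm_eq_integral_norm, integral_eq_tsum hn]
  rfl

theorem mul_norm_apply_le (hn : ∀ x, 0 ≤ n x) (f : Lp E 1 (weightedCounting n)) (x : X) :
    n x * ‖f x‖ ≤ ‖f‖ :=
  norm_eq_tsum hn f ▸ (summable_mul_norm hn f).le_tsum x
    fun y _ => mul_nonneg (hn y) (norm_nonneg _)

theorem continuous_apply (hn_pos : ∀ x, 0 < n x) (x : X) :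
    Continuous fun f : Lp E 1 (weightedCounting n) => f x := by
  refine (LipschitzWith.of_dist_le_mul (K := (n x)⁻¹.toNNReal) fun f g => ?_).continuous
  rw [Real.coe_toNNReal _ (inv_nonneg.2 (hn_pos x).le), dist_eq_norm, dist_eq_norm,
    ← Pi.sub_apply, ← eq_of_ae_eq hn_pos (Lp.coeFn_sub f g), inv_mul_eq_div,
    le_div_iff₀ (hn_pos x), mul_comm]
  exact mul_norm_apply_le (fun y => (hn_pos y).le) (f - g) x

end weightedCounting

section ProbabilityDensities

variable {X : Type*} [MeasurableSpace X]

theorem norm_eq_one_of_mem_probabilityDensities {μ : Measure X} {f : Lp ℂ 1 μ}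
    (hf : f ∈ probabilityDensities μ) : ‖f‖ = 1 := by
  apply Complex.ofReal_injective
  rw [L1.norm_eq_integral_norm, ← integral_complex_ofReal, Complex.ofReal_one, ← hf.2]
  exact integral_congr_ae (Filter.Eventually.of_forall fun x => Complex.norm_of_nonneg' (hf.1 x))

theorem isBounded_probabilityDensities (μ : Measure X) :
    Bornology.IsBounded (probabilityDensities μ) :=
  (Metric.isBounded_closedBall (x := (0 : Lp ℂ 1 μ)) (r := 1)).subset fun f hf => by
    simp [norm_eq_one_of_mem_probabilityDensities hf]

theorem exists_re_ne_zero_of_mem_probabilityDensities {μ : Measure X} {f : Lp ℂ 1 μ}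
    (hf : f ∈ probabilityDensities μ) : ∃ x, (f x).re ≠ 0 := by
  by_contra! h
  have hzero : ⇑f = 0 := funext fun x => by
    rw [Pi.zero_apply, Complex.eq_re_of_ofReal_le (hf.1 x), h x, Complex.ofReal_zero]
  simpa [hzero] using hf.2

variable [MeasurableSingletonClass X] {n : X → ℝ} (hn_pos : ∀ x, 0 < n x)
include hn_pos

theorem convex_probabilityDensities :
    Convex ℝ (probabilityDensities (weightedCounting n)) := by
  intro f hf g hg a c ha hc hac
  have hcoe : ⇑(a • f + c • g) = a • ⇑f + c • ⇑g :=
    (weightedCounting.eq_of_ae_eq hn_pos ((Lp.coeFn_add _ _).trans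
      ((Lp.coeFn_smul a f).add (Lp.coeFn_smul c g))))
  refine ⟨fun x => ?_, ?_⟩
  · simp only [hcoe, Pi.add_apply, Pi.smul_apply, Complex.real_smul]
    exact add_nonneg (mul_nonneg (Complex.zero_le_real.2 ha) (hf.1 x))
      (mul_nonneg (Complex.zero_le_real.2 hc) (hg.1 x))
  · rw [hcoe, integral_add' ((L1.integrable_coeFn f).smul a) ((L1.integrable_coeFn g).smul c)]
    simp only [Pi.smul_apply, integral_smul, hf.2, hg.2, ← add_smul, hac, one_smul]

theorem isClosed_probabilityDensities [Countable X] :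
    IsClosed (probabilityDensities (weightedCounting n)) := by
  have hcone : IsClosed {f : Lp ℂ 1 (weightedCounting n) | ∀ x, 0 ≤ f x} := by
    rw [Set.ofPred_forall]
    exact isClosed_iInter fun x =>
      isClosed_Ici.preimage (weightedCounting.continuous_apply hn_pos x)
  exact hcone.inter (isClosed_eq continuous_integral continuous_const)

theorem nonempty_probabilityDensities [Nonempty X] :
    (probabilityDensities (weightedCounting n)).Nonempty := by
  classical
  obtain ⟨x₀⟩ := ‹Nonempty X›
  have hfin : weightedCounting n {x₀} ≠ ⊤ := by
    simp [weightedCounting.apply_singleton]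
  refine ⟨indicatorConstLp 1 (measurableSet_singleton x₀) hfin ((n x₀ : ℂ)⁻¹), fun x => ?_, ?_⟩
  · rw [weightedCounting.eq_of_ae_eq hn_pos indicatorConstLp_coeFn, Set.indicator_apply]
    split_ifs
    · exact inv_nonneg.2 (Complex.zero_le_real.2 (hn_pos x₀).le)
    · exact le_rfl
  · rw [integral_indicatorConstLp, measureReal_def, weightedCounting.apply_singleton,
      ENNReal.toReal_ofReal (hn_pos x₀).le, Complex.real_smul]
    exact mul_inv_cancel₀ (Complex.ofReal_ne_zero.2 (hn_pos x₀).ne')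

end ProbabilityDensities

theorem isHarmonic_re_of_fixed {X : Type*} [MeasurableSpace X] {μ : Measure X}
    {b : X → X → ℝ} {n : X → ℝ} (hn_pos : ∀ x, 0 < n x) {P : Lp ℂ 1 μ →L[ℂ] Lp ℂ 1 μ}
    (hP : ∀ f x, P f x = (n x : ℂ)⁻¹ * ∑' y, (b x y : ℂ) * f y) {h : Lp ℂ 1 μ}
    (hh : h ∈ probabilityDensities μ) (hPh : P h = h) :
    IsHarmonic b n fun x => (h x).re := by
  intro x
  have hre : ∀ y, h y = ((h y).re : ℂ) := fun y => Complex.eq_re_of_ofReal_le (hh.1 y)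
  have hfix : (((h x).re : ℝ) : ℂ) = (((n x)⁻¹ * ∑' y, b x y * (h y).re : ℝ) : ℂ) := by
    conv_lhs => rw [← hre x, ← hPh, hP]
    push_cast [Complex.ofReal_tsum]
    simp only [← hre]
  rw [Complex.ofReal_inj, eq_inv_mul_iff_mul_eq₀ (hn_pos x).ne'] at hfix
  exact hfix.symm

section Transition

variable {X : Type*} [MeasurableSpace X] [MeasurableSingletonClass X] [Countable X]
  {b : X → X → ℝ} {n : X → ℝ} (G : IsWeightedGraph b n) (hn_pos : ∀ x, 0 < n x)
  {P : Lp ℂ 1 (weightedCounting n) →L[ℂ] Lp ℂ 1 (weightedCounting n)}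
  (hP : ∀ f x, P f x = (n x : ℂ)⁻¹ * ∑' y, (b x y : ℂ) * f y)
include G hn_pos hP

theorem integral_transition (f : Lp ℂ 1 (weightedCounting n)) :
    ∫ x, P f x ∂weightedCounting n = ∫ x, f x ∂weightedCounting n := by
  simp only [weightedCounting.integral_eq_tsum G.degree_nonneg, hP, Complex.real_smul,
    mul_inv_cancel_left₀ (Complex.ofReal_ne_zero.2 (hn_pos _).ne')]
  simpa only [Complex.real_smul] using G.tsum_tsum_edge_smul
    (weightedCounting.summable_mul_norm G.degree_nonneg f)

theorem mapsTo_probabilityDensities :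
    Set.MapsTo P (probabilityDensities (weightedCounting n))
      (probabilityDensities (weightedCounting n)) := by
  refine fun f hf => ⟨fun x => ?_, (integral_transition G hn_pos hP f).trans hf.2⟩
  rw [hP, ← Complex.ofReal_inv]
  exact mul_nonneg (Complex.zero_le_real.2 (inv_nonneg.2 (hn_pos x).le))
    (tsum_nonneg fun y => mul_nonneg (Complex.zero_le_real.2 (G.nonneg x y)) (hf.1 y))

end Transition

theorem stmt19_general {X : Type*} [Countable X] [MeasurableSpace X] [MeasurableSingletonClass X]
    (b : X → X → ℝ)
    (hb_symm : ∀ x y, b x y = b y x)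
    (hb_nonneg : ∀ x y, 0 ≤ b x y)
    (n : X → ℝ) (hn : ∀ x, HasSum (b x) (n x)) (hn_pos : ∀ x, 0 < n x)
    (α : ℝ) (hα_pos : 0 < α)
    (hα : IsGreatest {β : ℝ | 0 ≤ β ∧ ∀ W : Finset X,
      β * (∑ x ∈ W, n x) ≤ ∑ x ∈ W, ∑' y : {y : X // y ∉ W}, b x y} α)
    (μ : Measure X)
    (hμ : μ = Measure.sum fun x => ENNReal.ofReal (n x) • Measure.dirac x)
    (P : Lp ℂ 1 μ →L[ℂ] Lp ℂ 1 μ)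
    (hP : ∀ f : Lp ℂ 1 μ, ∀ᵐ x ∂μ,
      (P f : X → ℂ) x = (n x : ℂ)⁻¹ * ∑' y : X, (b x y : ℂ) * (f : X → ℂ) y) :
    ¬ IsCompactOperator P := by
  obtain rfl : μ = weightedCounting n := hμ
  have G : IsWeightedGraph b n := ⟨hb_symm, hb_nonneg, hn⟩
  have hPx := fun f => weightedCounting.forall_of_ae hn_pos (hP f)
  have : Nonempty X := by
    by_contra hX
    rw [not_nonempty_iff] at hX
    have := hα.2 (show α + 1 ∈ _ from
      ⟨by linarith, fun W => by simp [Finset.eq_empty_of_isEmpty W]⟩)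
    linarith
  intro hP_compact
  obtain ⟨h, hh, hPh⟩ := IsCompactOperator.exists_fixedPoint_mem (T := P.restrictScalars ℝ)
    hP_compact (convex_probabilityDensities hn_pos) (isClosed_probabilityDensities hn_pos)
    (isBounded_probabilityDensities _) (nonempty_probabilityDensities hn_pos)
    (mapsTo_probabilityDensities G hn_pos hPx)
  have hH : ∀ x, 0 ≤ (h x).re := fun x => (hh.1 x).1
  have hHs : Summable fun x => n x * (h x).re :=
    (weightedCounting.summable_mul_norm G.degree_nonneg h).congr fun x => by
      rw [Complex.re_eq_norm.2 (hh.1 x)]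
  have harm := isHarmonic_re_of_fixed hn_pos hPx hh hPh
  obtain ⟨x, hx⟩ := exists_re_ne_zero_of_mem_probabilityDensities hh
  exact hx (harm.eq_zero_of_cheeger G hH hHs hn_pos hα_pos hα.1.2 x)

/-- Assume `m = n` and that the Cheeger constant `α` is strictly positive,
where `α` is the maximal `β ≥ 0` with `β n(W) ≤ |∂W|` for all finite `W ⊆ X`. Then the
operator `I - L₁`, i.e. the transition operator `(P f)(x) = (1/n(x)) ∑_y b(x,y) f(y)` acting
on `ℓ¹(X,n)`, is not a compact operator. Here `ℓ¹(X,n)` is realized as `Lp ℂ 1 μ` for the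
weighted counting measure `μ = ∑_x n(x) δ_x`. -/
theorem stmt19 {X : Type*} [Countable X] [MeasurableSpace X] [MeasurableSingletonClass X]
    (b : X → X → ℝ)
    (hb_symm : ∀ x y, b x y = b y x)
    (hb_diag : ∀ x, b x x = 0)
    (hb_nonneg : ∀ x y, 0 ≤ b x y)
    (n : X → ℝ) (hn : ∀ x, HasSum (b x) (n x)) (hn_pos : ∀ x, 0 < n x)
    (α : ℝ) (hα_pos : 0 < α)
    (hα : IsGreatest {β : ℝ | 0 ≤ β ∧ ∀ W : Finset X,
      β * (∑ x ∈ W, n x) ≤ ∑ x ∈ W, ∑' y : {y : X // y ∉ W}, b x y} α)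
    (μ : Measure X)
    (hμ : μ = Measure.sum fun x => ENNReal.ofReal (n x) • Measure.dirac x)
    (P : Lp ℂ 1 μ →L[ℂ] Lp ℂ 1 μ)
    (hP : ∀ f : Lp ℂ 1 μ, ∀ᵐ x ∂μ,
      (P f : X → ℂ) x = (n x : ℂ)⁻¹ * ∑' y : X, (b x y : ℂ) * (f : X → ℂ) y) :
    ¬ IsCompactOperator P :=
  stmt19_general b hb_symm hb_nonneg n hn hn_pos α hα_pos hα μ hμ P hP
end
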